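/- arXiv:2506.09816 — 7 statements merged into one kernel-verified Lean document; each statement's English description precedes it below -/
import Mathlib

section
/- Let n ≥ 1 and A ∈ ℝ^{n×n}. Then A is globally unidentifiable if and only if there exists a complex number λ such that the rank over ℂ of (A - λI) (viewing A as a complex matrix via the embedding ℝ → ℂ) is at most n - 2; equivalently, some eigenvalue of A has geometric multiplicity at least 2, i.e., A has more than one Jordan block for that eigenvalue. -/
open MeasureTheory

/-- `A` is *identifiable from* the initial condition `x₀` if no other matrix `B ≠ A`
produces the same solution trajectory `t ↦ exp (t • B) *ᵥ x₀` of the linear ODE. -/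
def IdentifiableFrom {n : ℕ} (A : Matrix (Fin n) (Fin n) ℝ) (x₀ : Fin n → ℝ) : Prop :=
  ¬ ∃ B : Matrix (Fin n) (Fin n) ℝ, B ≠ A ∧
      ∀ t : ℝ, (NormedSpace.exp (t • B)).mulVec x₀ = (NormedSpace.exp (t • A)).mulVec x₀

/-- `A` is *globally unidentifiable* if it is not identifiable from any initial condition. -/
def GloballyUnidentifiable {n : ℕ} (A : Matrix (Fin n) (Fin n) ℝ) : Prop :=
  ∀ x₀ : Fin n → ℝ, ¬ IdentifiableFrom A x₀

namespace UnidentAux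
open Polynomial Module Matrix

variable {K : Type*} [Field K] {V : Type*} [AddCommGroup V] [Module K V]

/-- Evaluation of polynomials at `f`, applied to `v`, as a linear map. -/
noncomputable def pev (f : Module.End K V) (v : V) : Polynomial K →ₗ[K] V where
  toFun p := Polynomial.aeval f p v
  map_add' p q := by simp [LinearMap.add_apply]
  map_smul' c p := by simp [LinearMap.smul_apply]

@[simp] lemma pev_apply (f : Module.End K V) (v : V) (p : Polynomial K) :
    pev f v p = Polynomial.aeval f p v := rfl

/-- The Krylov subspace generated by `v` under `f`. -/
noncomputable def kry (f : Module.End K V) (v : V) : Submodule K V :=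
  LinearMap.range (pev f v)

lemma mem_kry {f : Module.End K V} {v x : V} :
    x ∈ kry f v ↔ ∃ p : Polynomial K, Polynomial.aeval f p v = x := by
  simp [kry, LinearMap.mem_range]

lemma pow_apply_mem_kry (f : Module.End K V) (v : V) (k : ℕ) :
    (f ^ k) v ∈ kry f v :=
  mem_kry.2 ⟨X ^ k, by simp⟩

lemma self_mem_kry (f : Module.End K V) (v : V) : v ∈ kry f v := by
  simpa using pow_apply_mem_kry f v 0

lemma kry_eq_span (f : Module.End K V) (v : V) :
    kry f v = Submodule.span K (Set.range fun k : ℕ => (f ^ k) v) := by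
  apply le_antisymm
  · rintro x ⟨p, rfl⟩
    rw [pev_apply, Polynomial.aeval_eq_sum_range, LinearMap.sum_apply]
    refine Submodule.sum_mem _ fun i _ => ?_
    rw [LinearMap.smul_apply]
    exact Submodule.smul_mem _ _ (Submodule.subset_span ⟨i, rfl⟩)
  · rw [Submodule.span_le]
    rintro x ⟨k, rfl⟩
    exact pow_apply_mem_kry f v k

lemma aeval_aeval_apply (f : Module.End K V) (p q : Polynomial K) (v : V) :
    Polynomial.aeval f p (Polynomial.aeval f q v) = Polynomial.aeval f (p * q) v := by
  rw [_root_.map_mul, Module.End.mul_apply]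

lemma kry_aeval_le (f : Module.End K V) (q : Polynomial K) (v : V) :
    kry f (Polynomial.aeval f q v) ≤ kry f v := by
  rintro x ⟨p, rfl⟩
  exact mem_kry.2 ⟨p * q, (aeval_aeval_apply f p q v).symm⟩

lemma kry_aeval_eq_map (f : Module.End K V) (q : Polynomial K) (v : V) :
    kry f (Polynomial.aeval f q v) = Submodule.map (Polynomial.aeval f q) (kry f v) := by
  apply le_antisymm
  · rintro x ⟨p, rfl⟩
    refine ⟨Polynomial.aeval f p v, mem_kry.2 ⟨p, rfl⟩, ?_⟩
    rw [pev_apply, aeval_aeval_apply, aeval_aeval_apply, mul_comm]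

  · rintro x ⟨y, ⟨p, rfl⟩, rfl⟩
    exact mem_kry.2 ⟨p, by rw [pev_apply, aeval_aeval_apply, aeval_aeval_apply, mul_comm]⟩

lemma kry_le_of_invariant {f : Module.End K V} {v : V} {W : Submodule K V}
    (hW : ∀ x ∈ W, f x ∈ W) (hv : v ∈ W) : kry f v ≤ W := by
  have hpow : ∀ k : ℕ, (f ^ k) v ∈ W := by
    intro k
    induction k with
    | zero => simpa using hv
    | succ k ih => rw [pow_succ', Module.End.mul_apply]; exact hW _ ih
  rw [kry_eq_span, Submodule.span_le]
  rintro x ⟨k, rfl⟩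
  exact hpow k

end UnidentAux

section FD

open Polynomial Module Matrix
namespace UnidentAux

variable {K : Type*} [Field K] {V : Type*} [AddCommGroup V] [Module K V]
variable [FiniteDimensional K V]

/-- Kernel chain growth bound. -/
lemma finrank_inf_ker_pow_le (h : Module.End K V) (W : Submodule K V)
    (hinv : ∀ x ∈ W, h x ∈ W) (h1 : Module.finrank K (LinearMap.ker h) ≤ 1) (k : ℕ) :
    Module.finrank K ↥(W ⊓ LinearMap.ker (h ^ k)) ≤ k := by
  induction k with
  | zero =>
      rw [pow_zero]
      have : LinearMap.ker (1 : Module.End K V) = ⊥ := LinearMap.ker_id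
      rw [this, inf_bot_eq, finrank_bot]
  | succ k ih =>
      set p := W ⊓ LinearMap.ker (h ^ (k + 1)) with hp
      set q := W ⊓ LinearMap.ker (h ^ k) with hq
      have hmem : ∀ x ∈ p, h x ∈ q := by
        intro x hx
        rw [hp, Submodule.mem_inf] at hx
        rw [hq, Submodule.mem_inf]
        refine ⟨hinv x hx.1, ?_⟩
        rw [LinearMap.mem_ker, ← Module.End.mul_apply, ← pow_succ]
        exact hx.2
      let φ : p →ₗ[K] q := h.restrict hmem
      have hrn := LinearMap.finrank_range_add_finrank_ker φ
      have hr : Module.finrank K ↥(LinearMap.range φ) ≤ k :=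
        le_trans (Submodule.finrank_le _) ih
      have hk : Module.finrank K ↥(LinearMap.ker φ) ≤ 1 := by
        refine le_trans (LinearMap.finrank_le_finrank_of_injective
          (f := LinearMap.codRestrict (LinearMap.ker h)
            (p.subtype.comp (LinearMap.ker φ).subtype) ?_) ?_) h1
        · rintro ⟨⟨x, hx⟩, hker⟩
          have h1' : φ ⟨x, hx⟩ = 0 := hker
          have h2' : h x = 0 := congrArg Subtype.val h1'
          exact h2'
        · intro a b hab
          have h3' := congrArg Subtype.val hab
          exact Subtype.ext (Subtype.ext h3')
      omega

lemma linearIndependent_pow_apply {h : Module.End K V} {x : V} {d : ℕ}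
    (h0 : (h ^ d) x = 0) (hx : (h ^ (d - 1)) x ≠ 0) (hd : d ≠ 0) :
    LinearIndependent K fun i : Fin d => (h ^ (i : ℕ)) x := by
  have hge : ∀ m : ℕ, d ≤ m → (h ^ m) x = 0 := by
    intro m hm
    have : h ^ m = h ^ (m - d) * h ^ d := by rw [← pow_add]; congr 1; omega
    rw [this, Module.End.mul_apply, h0, map_zero]
  rw [Fintype.linearIndependent_iff]
  intro g hg
  -- strong induction on the index
  suffices H : ∀ j : ℕ, ∀ i : Fin d, (i : ℕ) = j → g i = 0 by
    intro i; exact H i i rfl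
  intro j
  induction j using Nat.strong_induction_on with
  | _ j IH =>
    intro i hi
    subst hi
    have happ := congrArg (h ^ (d - 1 - (i : ℕ))) hg
    rw [map_zero, map_sum] at happ
    have hsum : ∀ i' : Fin d, i' ≠ i →
        (h ^ (d - 1 - (i : ℕ))) (g i' • (h ^ (i' : ℕ)) x) = 0 := by
      intro i' hne
      rw [_root_.map_smul, ← Module.End.mul_apply, ← pow_add]
      rcases lt_or_gt_of_ne (fun hc : (i' : ℕ) = (i : ℕ) => hne (Fin.ext hc)) with hlt | hgt
      · rw [IH _ hlt i' rfl, zero_smul]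
      · rw [hge _ (by omega), smul_zero]
    rw [Finset.sum_eq_single i (fun i' _ hne => hsum i' hne) (by simp)] at happ
    rw [_root_.map_smul, ← Module.End.mul_apply, ← pow_add] at happ
    have hexp : d - 1 - (i : ℕ) + (i : ℕ) = d - 1 := by have := i.2; omega
    rw [hexp] at happ
    rcases smul_eq_zero.1 happ with hg0 | hx0
    · exact hg0
    · exact absurd hx0 hx

/-- Cyclic vector for the (generalized eigenspace) kernel of a power,
assuming one-dimensional eigenspace. -/
lemma exists_kry_eq_of_ker_pow {f : Module.End K V} {μ : K} {W : Submodule K V}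
    (hWker : W = LinearMap.ker ((f - μ • 1) ^ Module.finrank K V))
    (h1 : Module.finrank K (f.eigenspace μ) ≤ 1) :
    ∃ v ∈ W, kry f v = W := by
  classical
  set n := Module.finrank K V with hn
  set h : Module.End K V := f - μ • 1 with hh
  have hcomm : f * h = h * f := by
    simp only [hh, mul_sub, sub_mul, mul_smul_comm, smul_mul_assoc, mul_one, one_mul]
  have hWinv : ∀ x ∈ W, f x ∈ W := by
    intro x hx
    rw [hWker, LinearMap.mem_ker] at hx ⊢
    have hc : Commute f h := hcomm
    have hcn : f * h ^ n = h ^ n * f := (hc.pow_right n).eq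
    rw [← Module.End.mul_apply, ← hcn, Module.End.mul_apply, hx, map_zero]
  have hWh : ∀ x ∈ W, h x ∈ W := by
    intro x hx
    have hfx := hWinv x hx
    have : h x = f x - μ • x := by simp [hh]
    rw [this]
    exact Submodule.sub_mem _ hfx (Submodule.smul_mem _ _ hx)
  have hker1 : Module.finrank K (LinearMap.ker h) ≤ 1 := by
    have : f.eigenspace μ = LinearMap.ker h := by rw [Module.End.eigenspace_def, hh]
    rwa [this] at h1
  -- the property of killing all of W
  have hPn : ∀ x ∈ W, (h ^ n) x = 0 := by
    intro x hx; rw [hWker, LinearMap.mem_ker] at hx; exact hx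
  let P : ℕ → Prop := fun k => ∀ x ∈ W, (h ^ k) x = 0
  have hPex : ∃ k, P k := ⟨n, hPn⟩
  set d := Nat.find hPex with hd
  have hPd : P d := Nat.find_spec hPex
  rcases Nat.eq_zero_or_pos d with hd0 | hdpos
  · -- W = ⊥
    have hWbot : W = ⊥ := by
      rw [Submodule.eq_bot_iff]
      intro x hx
      have := hPd x hx
      rw [hd0] at this
      simpa using this
    refine ⟨0, by simp, ?_⟩
    rw [hWbot, Submodule.eq_bot_iff]
    rintro x ⟨p, rfl⟩
    simp
  · -- pick x with h^(d-1) x ≠ 0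
    have hnot : ¬ P (d - 1) := Nat.find_min hPex (by omega)
    simp only [P, not_forall] at hnot
    push_neg at hnot
    obtain ⟨x, hxW, hxne⟩ := hnot
    have h0x : (h ^ d) x = 0 := hPd x hxW
    have hLI := linearIndependent_pow_apply h0x hxne (by omega)
    have hspan : Module.finrank K ↥(Submodule.span K
        (Set.range fun i : Fin d => (h ^ (i : ℕ)) x)) = d := by
      rw [finrank_span_eq_card hLI, Fintype.card_fin]
    have hkx : kry f x ≤ W := kry_le_of_invariant hWinv hxW
    have hsle : Submodule.span K (Set.range fun i : Fin d => (h ^ (i : ℕ)) x) ≤ kry f x := by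
      rw [Submodule.span_le]
      rintro y ⟨i, rfl⟩
      refine mem_kry.2 ⟨(X - C μ) ^ (i : ℕ), ?_⟩
      have : Polynomial.aeval f (X - C μ) = h := by
        simp [hh, Module.algebraMap_end_eq_smul_id, Module.End.one_eq_id]
      rw [map_pow, this]
    have hWd : Module.finrank K ↥W ≤ d := by
      have : W ⊓ LinearMap.ker (h ^ d) = W := by
        rw [inf_eq_left]
        intro y hy
        exact hPd y hy
      calc Module.finrank K ↥W = Module.finrank K ↥(W ⊓ LinearMap.ker (h ^ d)) := by rw [this]
        _ ≤ d := finrank_inf_ker_pow_le h W hWh hker1 d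
    refine ⟨x, hxW, ?_⟩
    apply Submodule.eq_of_le_of_finrank_le hkx
    calc Module.finrank K ↥W ≤ d := hWd
      _ = _ := hspan.symm
      _ ≤ Module.finrank K ↥(kry f x) := Submodule.finrank_mono hsle

end UnidentAux
end FD

section Cyclic

open Polynomial Module Matrix
namespace UnidentAux

variable {K : Type*} [Field K] [IsAlgClosed K] {V : Type*} [AddCommGroup V] [Module K V]
variable [FiniteDimensional K V]

lemma maxGen_eq_ker (f : Module.End K V) (μ : K) :
    f.maxGenEigenspace μ = LinearMap.ker ((f - μ • 1) ^ Module.finrank K V) := by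
  apply le_antisymm
  · have := Module.End.genEigenspace_le_genEigenspace_finrank f μ ⊤
    rwa [Module.End.genEigenspace_nat] at this
  · have : (Module.finrank K V : ℕ∞) ≤ ⊤ := le_top
    have h2 := (f.genEigenspace μ).monotone this
    rwa [Module.End.genEigenspace_nat] at h2

theorem exists_cyclic (f : Module.End K V)
    (hEig : ∀ μ : K, Module.finrank K (f.eigenspace μ) ≤ 1) :
    ∃ v : V, kry f v = ⊤ := by
  classical
  set n := Module.finrank K V with hn
  -- integralness and eigenvalue finiteness
  have hInt : IsIntegral K f := Algebra.IsIntegral.isIntegral f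
  have hmp : minpoly K f ≠ 0 := minpoly.ne_zero hInt
  set S : Finset K := (minpoly K f).roots.toFinset with hS
  have hSmem : ∀ μ : K, f.maxGenEigenspace μ ≠ ⊥ → μ ∈ S := by
    intro μ hne
    have hgen : f.HasGenEigenvalue μ n := by
      rw [Module.End.hasGenEigenvalue_iff]
      intro hbot
      apply hne
      rw [maxGen_eq_ker]
      rw [Module.End.genEigenspace_nat] at hbot
      exact hbot
    have hev : f.HasEigenvalue μ := Module.End.hasEigenvalue_of_hasGenEigenvalue hgen
    have hroot : (minpoly K f).IsRoot μ := (Module.End.hasEigenvalue_iff_isRoot).1 hev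
    rw [hS, Multiset.mem_toFinset, mem_roots hmp]
    exact hroot
  -- choose a cyclic vector for each generalized eigenspace
  have hch : ∀ μ : K, ∃ v ∈ f.maxGenEigenspace μ, kry f v = f.maxGenEigenspace μ := by
    intro μ
    exact exists_kry_eq_of_ker_pow (maxGen_eq_ker f μ) (hEig μ)
  choose w hwmem hwkry using hch
  set v : V := ∑ μ ∈ S, w μ with hv
  refine ⟨v, ?_⟩
  rw [eq_top_iff, ← Module.End.iSup_maxGenEigenspace_eq_top f]
  apply iSup_le
  intro μ
  by_cases hbot : f.maxGenEigenspace μ = ⊥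
  · rw [hbot]; exact bot_le
  · have hμS : μ ∈ S := hSmem μ hbot
    set q : Polynomial K := ∏ ν ∈ S.erase μ, (X - C ν) ^ n with hq
    -- q(f) kills w ν for ν ≠ μ in S
    have hkill : ∀ ν ∈ S, ν ≠ μ → Polynomial.aeval f q (w ν) = 0 := by
      intro ν hνS hνμ
      have hν : ν ∈ S.erase μ := Finset.mem_erase.2 ⟨hνμ, hνS⟩
      have hfac : q = (∏ σ ∈ (S.erase μ).erase ν, (X - C σ) ^ n) * (X - C ν) ^ n := by
        exact hq.trans ((Finset.mul_prod_erase _ _ hν).symm.trans (mul_comm _ _))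
      have hker : Polynomial.aeval f ((X - C ν) ^ n) (w ν) = 0 := by
        have hmem := hwmem ν
        rw [maxGen_eq_ker, LinearMap.mem_ker] at hmem
        have : Polynomial.aeval f ((X - C ν) ^ n) = (f - ν • 1) ^ n := by
          rw [map_pow]; congr 1
          simp [Module.algebraMap_end_eq_smul_id, Module.End.one_eq_id]
        rw [this]
        exact hmem
      rw [hfac, _root_.map_mul, Module.End.mul_apply, hker, map_zero]
    have hqv : Polynomial.aeval f q v = Polynomial.aeval f q (w μ) := by
      rw [hv, map_sum]
      rw [Finset.sum_eq_single μ (fun ν hν hne => hkill ν hν hne) (fun h => absurd hμS h)]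
    -- q(f) maps the generalized eigenspace onto itself
    have hGker := maxGen_eq_ker f μ
    have hGinv : ∀ x ∈ f.maxGenEigenspace μ, Polynomial.aeval f q x ∈ f.maxGenEigenspace μ := by
      intro x hx
      rw [hGker, LinearMap.mem_ker] at hx ⊢
      have hcomm : (f - μ • 1) ^ n * Polynomial.aeval f q
          = Polynomial.aeval f q * (f - μ • 1) ^ n := by
        have h1 : ((f : Module.End K V) - μ • 1) ^ n = Polynomial.aeval f ((X - C μ) ^ n) := by
          rw [map_pow]; congr 1
          simp [Module.algebraMap_end_eq_smul_id, Module.End.one_eq_id]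
        rw [h1, ← _root_.map_mul, ← _root_.map_mul, mul_comm]
      rw [← Module.End.mul_apply, hcomm, Module.End.mul_apply, hx, map_zero]
    have hcop : IsCoprime q ((X - C μ) ^ n) := by
      apply IsCoprime.pow_right
      apply IsCoprime.prod_left
      intro ν hν
      apply IsCoprime.pow_left
      apply Polynomial.isCoprime_X_sub_C_of_isUnit_sub
      have : ν ≠ μ := (Finset.mem_erase.1 hν).1
      exact (sub_ne_zero.2 this).isUnit
    have hinj : ∀ x ∈ f.maxGenEigenspace μ, Polynomial.aeval f q x = 0 → x = 0 := by
      intro x hx hqx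
      obtain ⟨a, b, hab⟩ := hcop
      have := congrArg (fun p => Polynomial.aeval f p x) hab
      simp only [_root_.map_mul, _root_.map_add, _root_.map_one, LinearMap.add_apply,
        Module.End.mul_apply, Module.End.one_apply] at this
      rw [hGker, LinearMap.mem_ker] at hx
      have hXC : Polynomial.aeval f ((X - C μ) ^ n) x = 0 := by
        have h1 : Polynomial.aeval f ((X - C μ) ^ n) = ((f : Module.End K V) - μ • 1) ^ n := by
          rw [map_pow]; congr 1
          simp [Module.algebraMap_end_eq_smul_id, Module.End.one_eq_id]
        rw [h1]; exact hx
      rw [hqx, hXC, map_zero, map_zero, add_zero] at this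
      exact this.symm
    -- restriction is surjective
    have hsurj : ∀ y ∈ f.maxGenEigenspace μ, ∃ x ∈ f.maxGenEigenspace μ,
        Polynomial.aeval f q x = y := by
      set G := f.maxGenEigenspace μ
      let φ : G →ₗ[K] G := (Polynomial.aeval f q).restrict hGinv
      have hφinj : Function.Injective φ := by
        intro a b hab
        have : Polynomial.aeval f q ((a : V) - b) = 0 := by
          have := congrArg (Subtype.val) hab
          simp only [LinearMap.restrict_apply, φ] at this
          rw [map_sub, this, sub_self]
        have hm : ((a : V) - b) ∈ G := Submodule.sub_mem _ a.2 b.2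
        have := hinj _ hm this
        exact Subtype.ext (sub_eq_zero.1 (by rwa [sub_eq_zero] at this ⊢))
      have hφsurj : Function.Surjective φ := (LinearMap.injective_iff_surjective).1 hφinj
      intro y hy
      obtain ⟨x, hx⟩ := hφsurj ⟨y, hy⟩
      refine ⟨x, x.2, ?_⟩
      have := congrArg Subtype.val hx
      simpa [φ, LinearMap.restrict_apply] using this
    -- conclude
    have hstep : f.maxGenEigenspace μ ≤ kry f (Polynomial.aeval f q (w μ)) := by
      intro y hy
      obtain ⟨x, hxG, hx⟩ := hsurj y hy
      rw [← hwkry μ] at hxG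
      rw [kry_aeval_eq_map]
      exact ⟨x, hxG, hx⟩
    calc f.maxGenEigenspace μ ≤ kry f (Polynomial.aeval f q (w μ)) := hstep
      _ = kry f (Polynomial.aeval f q v) := by rw [hqv]
      _ ≤ kry f v := kry_aeval_le f q v

end UnidentAux
end Cyclic

section Glue

open Polynomial Module Matrix
namespace UnidentAux

/-- Coordinatewise complexification of a real vector. -/
noncomputable def cvec {n : ℕ} (x : Fin n → ℝ) : Fin n → ℂ := fun i => (x i : ℂ)

lemma cvec_mulVec {n : ℕ} (A : Matrix (Fin n) (Fin n) ℝ) (x : Fin n → ℝ) :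
    (A.map Complex.ofReal) *ᵥ cvec x = cvec (A *ᵥ x) := by
  funext i
  have := (RingHom.map_mulVec Complex.ofRealHom A x i).symm
  exact this

lemma map_matrix_pow {n : ℕ} (A : Matrix (Fin n) (Fin n) ℝ) (k : ℕ) :
    (A.map Complex.ofReal) ^ k = (A ^ k).map Complex.ofReal := by
  have h1 : ∀ B : Matrix (Fin n) (Fin n) ℝ, B.map Complex.ofReal
      = Complex.ofRealHom.mapMatrix B := fun B => rfl
  rw [h1, h1, ← map_pow]

lemma cvec_pow_mulVec {n : ℕ} (A : Matrix (Fin n) (Fin n) ℝ) (x : Fin n → ℝ) (k : ℕ) :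
    ((A.map Complex.ofReal) ^ k) *ᵥ cvec x = cvec ((A ^ k) *ᵥ x) := by
  rw [map_matrix_pow, cvec_mulVec]

lemma cvec_single {n : ℕ} (j : Fin n) : cvec (Pi.single j (1:ℝ)) = Pi.single j (1:ℂ) := by
  funext i
  rcases eq_or_ne i j with h | h
  · subst h; simp [cvec]
  · simp [cvec, Pi.single_eq_of_ne h]

/-- The complexification map as an `ℝ`-linear map. -/
noncomputable def cmap (n : ℕ) : (Fin n → ℝ) →ₗ[ℝ] (Fin n → ℂ) where
  toFun := cvec
  map_add' x y := by funext i; simp [cvec]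
  map_smul' r x := by funext i; simp [cvec, Complex.real_smul]

lemma span_top_complexify {n : ℕ} {s : Set (Fin n → ℝ)}
    (hs : Submodule.span ℝ s = ⊤) : Submodule.span ℂ (cvec '' s) = ⊤ := by
  have hmem : ∀ x : Fin n → ℝ, cvec x ∈ Submodule.span ℂ (cvec '' s) := by
    intro x
    have h1 : cvec x ∈ Submodule.map (cmap n) (Submodule.span ℝ s) :=
      ⟨x, by rw [hs]; trivial, rfl⟩
    rw [Submodule.map_span] at h1
    have h2 := Submodule.span_le_restrictScalars ℝ ℂ (⇑(cmap n) '' s)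
    have h3 := h2 h1
    rw [Submodule.restrictScalars_mem] at h3
    have h4 : ⇑(cmap n) '' s = cvec '' s := rfl
    rwa [h4] at h3
  rw [Submodule.eq_top_iff']
  intro y
  rw [pi_eq_sum_univ y]
  refine Submodule.sum_mem _ fun j _ => Submodule.smul_mem _ _ ?_
  have h5 : (fun i => if j = i then (1:ℂ) else 0) = cvec (Pi.single j (1:ℝ)) := by
    rw [cvec_single]
    funext i
    simp [Pi.single_apply, eq_comm]
  rw [h5]
  exact hmem _

/-- Krylov space needs only the first `finrank` powers (Cayley–Hamilton). -/
lemma kry_eq_span_fin {K : Type*} [Field K] {V : Type*} [AddCommGroup V] [Module K V]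
    [FiniteDimensional K V] (f : Module.End K V) (v : V) :
    kry f v = Submodule.span K
      (Set.range fun i : Fin (Module.finrank K V) => (f ^ (i : ℕ)) v) := by
  classical
  set n := Module.finrank K V with hn
  apply le_antisymm
  · rcases Nat.eq_zero_or_pos n with hn0 | hnpos
    · have : Subsingleton V := by
        rw [← Module.finrank_zero_iff (R := K)]; omega
      intro x _
      have : x = 0 := Subsingleton.elim x 0
      rw [this]; exact Submodule.zero_mem _
    · set p := f.charpoly with hp
      have hdeg : p.natDegree = n := f.charpoly_natDegree
      have hfn : f ^ n = -(∑ i ∈ Finset.range n, p.coeff i • f ^ i) := by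
        have h0 : (Polynomial.aeval f) p = 0 := f.aeval_self_charpoly
        rw [Polynomial.aeval_eq_sum_range, hdeg, Finset.sum_range_succ] at h0
        have hmon : p.coeff n = 1 := by
          have := f.charpoly_monic
          rw [Polynomial.Monic, Polynomial.leadingCoeff, hdeg] at this
          exact this
        rw [hmon, one_smul] at h0
        exact (eq_neg_of_add_eq_zero_right h0)
      rw [kry_eq_span, Submodule.span_le]
      rintro x ⟨k, rfl⟩
      induction k using Nat.strong_induction_on with
      | _ k IH =>
        show (f ^ k) v ∈ (Submodule.span K (Set.range fun i : Fin n => (f ^ (i : ℕ)) v) : Set V)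
        rw [SetLike.mem_coe]
        by_cases hk : k < n
        · exact Submodule.subset_span ⟨⟨k, hk⟩, rfl⟩
        · push_neg at hk
          have hsplit : f ^ k = f ^ (k - n) * f ^ n := by
            rw [← pow_add]; congr 1; omega
          have hv' : (f ^ n) v = -∑ i ∈ Finset.range n, p.coeff i • (f ^ i) v := by
            rw [hfn]
            simp [LinearMap.sum_apply, LinearMap.smul_apply]
          rw [hsplit, Module.End.mul_apply, hv', map_neg, map_sum]
          refine Submodule.neg_mem _ (Submodule.sum_mem _ fun i hi => ?_)
          rw [Finset.mem_range] at hi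
          rw [_root_.map_smul, ← Module.End.mul_apply, ← pow_add]
          refine Submodule.smul_mem _ _ ?_
          exact IH (k - n + i) (by omega)
  · rw [Submodule.span_le]
    rintro x ⟨i, rfl⟩
    exact pow_apply_mem_kry f v (i : ℕ)

/-- Columns span iff nonzero determinant. -/
lemma span_range_eq_top_iff_det {m : ℕ} {F : Type*} [Field F] (g : Fin m → (Fin m → F)) :
    Submodule.span F (Set.range g) = ⊤ ↔ (Matrix.of fun i j => g j i).det ≠ 0 := by
  set M : Matrix (Fin m) (Fin m) F := Matrix.of fun i j => g j i with hM
  have hcols : Set.range Mᵀ = Set.range g := by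
    congr 1
  have h1 : Submodule.span F (Set.range g) = LinearMap.range M.mulVecLin := by
    rw [Matrix.range_mulVecLin]; rfl
  rw [h1, LinearMap.range_eq_top]
  have h2 : ⇑M.mulVecLin = M.mulVec := rfl
  rw [h2, Matrix.mulVec_surjective_iff_isUnit, Matrix.isUnit_iff_isUnit_det, isUnit_iff_ne_zero]

end UnidentAux
end Glue

section ExpLemmas

open Matrix NormedSpace
namespace UnidentAux

/-- `M ↦ M *ᵥ x₀` as a linear map. -/
noncomputable def mulVecL {n : ℕ} (x₀ : Fin n → ℝ) :
    Matrix (Fin n) (Fin n) ℝ →ₗ[ℝ] (Fin n → ℝ) where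
  toFun M := M *ᵥ x₀
  map_add' M N := Matrix.add_mulVec M N x₀
  map_smul' r M := Matrix.smul_mulVec r M x₀

@[simp] lemma mulVecL_apply {n : ℕ} (x₀ : Fin n → ℝ) (M : Matrix (Fin n) (Fin n) ℝ) :
    mulVecL x₀ M = M *ᵥ x₀ := rfl

lemma exp_mulVec_eq_tsum {n : ℕ} (M : Matrix (Fin n) (Fin n) ℝ) (x₀ : Fin n → ℝ) (t : ℝ) :
    NormedSpace.exp (t • M) *ᵥ x₀
      = ∑' k : ℕ, (((k.factorial : ℝ))⁻¹ * t ^ k) • ((M ^ k) *ᵥ x₀) := by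
  letI : SeminormedRing (Matrix (Fin n) (Fin n) ℝ) := Matrix.linftyOpSemiNormedRing
  letI : NormedRing (Matrix (Fin n) (Fin n) ℝ) := Matrix.linftyOpNormedRing
  letI : NormedAlgebra ℝ (Matrix (Fin n) (Fin n) ℝ) := Matrix.linftyOpNormedAlgebra
  have h1 : NormedSpace.exp (t • M) = ∑' k : ℕ, ((k.factorial : ℝ))⁻¹ • (t • M) ^ k := by
    rw [NormedSpace.exp_eq_tsum (𝕂 := ℝ)]
  have hsum : Summable fun k : ℕ => ((k.factorial : ℝ))⁻¹ • (t • M) ^ k :=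
    NormedSpace.expSeries_summable' (𝕂 := ℝ) (t • M)
  let L := LinearMap.toContinuousLinearMap (mulVecL x₀)
  have hL : ∀ N : Matrix (Fin n) (Fin n) ℝ, L N = N *ᵥ x₀ := fun N => rfl
  calc NormedSpace.exp (t • M) *ᵥ x₀ = L (∑' k : ℕ, ((k.factorial : ℝ))⁻¹ • (t • M) ^ k) := by
        rw [← h1, hL]
    _ = ∑' k : ℕ, L (((k.factorial : ℝ))⁻¹ • (t • M) ^ k) := L.map_tsum hsum
    _ = ∑' k : ℕ, (((k.factorial : ℝ))⁻¹ * t ^ k) • ((M ^ k) *ᵥ x₀) := by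
        congr 1
        funext k
        rw [hL, smul_pow, Matrix.smul_mulVec, Matrix.smul_mulVec, smul_smul]

/-- If the Krylov space of `x₀` is proper, `A` is not identifiable from `x₀`. -/
lemma span_eq_top_of_identifiable {n : ℕ} (hn : 1 ≤ n) (A : Matrix (Fin n) (Fin n) ℝ)
    (x₀ : Fin n → ℝ) (h : IdentifiableFrom A x₀) :
    Submodule.span ℝ (Set.range fun k : ℕ => (A ^ k) *ᵥ x₀) = ⊤ := by
  classical
  by_contra hne
  set p := Submodule.span ℝ (Set.range fun k : ℕ => (A ^ k) *ᵥ x₀) with hp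
  obtain ⟨φ, hφ0, hφ⟩ := Submodule.exists_dual_map_eq_bot_of_lt_top
    (lt_top_iff_ne_top.2 hne) inferInstance
  have hφker : ∀ x ∈ p, φ x = 0 := by
    intro x hx
    have : φ x ∈ Submodule.map φ p := ⟨x, hx, rfl⟩
    rw [hφ] at this
    simpa using this
  set c : Fin n → ℝ := fun j => φ (Pi.single j 1) with hc
  have hφx : ∀ x : Fin n → ℝ, φ x = c ⬝ᵥ x := by
    intro x
    have hxrep : x = ∑ i, x i • (fun j => if i = j then (1:ℝ) else 0) := pi_eq_sum_univ x
    have hsingle : ∀ i : Fin n, (fun j => if i = j then (1:ℝ) else 0) = Pi.single i 1 := by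
      intro i; funext j; rw [Pi.single_apply]; simp [eq_comm]
    conv_lhs => rw [hxrep]
    rw [map_sum]
    simp only [_root_.map_smul, smul_eq_mul]
    rw [dotProduct]
    apply Finset.sum_congr rfl
    intro i _
    rw [hsingle i]
    show x i * φ (Pi.single i 1) = c i * x i
    rw [mul_comm]
  have hkerk : ∀ k : ℕ, c ⬝ᵥ ((A ^ k) *ᵥ x₀) = 0 := by
    intro k
    rw [← hφx]
    exact hφker _ (Submodule.subset_span ⟨k, rfl⟩)
  have hc0 : c ≠ 0 := by
    intro h0
    apply hφ0
    apply LinearMap.ext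
    intro x
    rw [hφx, h0]
    simp
  obtain ⟨j0, hj0⟩ := Function.ne_iff.1 hc0
  set i0 : Fin n := ⟨0, hn⟩
  set w : Fin n → ℝ := Pi.single i0 1 with hw
  set B := A + Matrix.vecMulVec w c with hB
  have hvmv : ∀ y : Fin n → ℝ, Matrix.vecMulVec w c *ᵥ y = (c ⬝ᵥ y) • w := by
    intro y
    funext i
    show ∑ j, Matrix.vecMulVec w c i j * y j = (c ⬝ᵥ y) * w i
    simp only [Matrix.vecMulVec_apply]
    rw [dotProduct, Finset.sum_mul]
    rw [show ∑ j, w i * c j * y j = ∑ j, c j * y j * w i from by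
      apply Finset.sum_congr rfl; intro j _; ring]
  exact h ⟨B, by
    -- B ≠ A
    intro hBA
    have : B i0 j0 = A i0 j0 := by rw [hBA]
    rw [hB] at this
    simp only [Matrix.add_apply, Matrix.vecMulVec_apply] at this
    rw [hw, Pi.single_eq_same, one_mul] at this
    have : c j0 = 0 := by linarith
    exact hj0 this, by
    -- equal trajectories
    intro t
    have hBk : ∀ k : ℕ, (B ^ k) *ᵥ x₀ = (A ^ k) *ᵥ x₀ := by
      intro k
      induction k with
      | zero => rfl
      | succ k ih =>
          rw [pow_succ', ← Matrix.mulVec_mulVec, ih, hB, Matrix.add_mulVec, hvmv, hkerk,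
            zero_smul, add_zero, Matrix.mulVec_mulVec, ← pow_succ']
    rw [exp_mulVec_eq_tsum, exp_mulVec_eq_tsum]
    congr 1
    funext k
    rw [hBk]⟩

/-- If the Krylov space of `x₀` is everything, `A` is identifiable from `x₀`. -/
lemma identifiable_of_span_eq_top {n : ℕ} (A : Matrix (Fin n) (Fin n) ℝ)
    (x₀ : Fin n → ℝ)
    (hsp : Submodule.span ℝ (Set.range fun k : ℕ => (A ^ k) *ᵥ x₀) = ⊤) :
    IdentifiableFrom A x₀ := by
  classical
  letI : SeminormedRing (Matrix (Fin n) (Fin n) ℝ) := Matrix.linftyOpSemiNormedRing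
  letI : NormedRing (Matrix (Fin n) (Fin n) ℝ) := Matrix.linftyOpNormedRing
  letI : NormedAlgebra ℝ (Matrix (Fin n) (Fin n) ℝ) := Matrix.linftyOpNormedAlgebra
  rintro ⟨B, hBA, htraj⟩
  apply hBA
  -- derivative machinery
  have key : ∀ (P C : Matrix (Fin n) (Fin n) ℝ) (t : ℝ) (M : Matrix (Fin n) (Fin n) ℝ),
      HasDerivAt (fun u : ℝ => P *ᵥ ((C * NormedSpace.exp (u • M)) *ᵥ x₀))
        (P *ᵥ ((C * (M * NormedSpace.exp (t • M))) *ᵥ x₀)) t := by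
    intro P C t M
    let G : Matrix (Fin n) (Fin n) ℝ →ₗ[ℝ] (Fin n → ℝ) :=
      { toFun := fun N => P *ᵥ ((C * N) *ᵥ x₀)
        map_add' := fun N₁ N₂ => by
          show P *ᵥ ((C * (N₁ + N₂)) *ᵥ x₀) = P *ᵥ ((C * N₁) *ᵥ x₀) + P *ᵥ ((C * N₂) *ᵥ x₀)
          rw [mul_add, Matrix.add_mulVec, Matrix.mulVec_add]
        map_smul' := fun r N => by
          show P *ᵥ ((C * (r • N)) *ᵥ x₀) = r • (P *ᵥ ((C * N) *ᵥ x₀))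
          rw [mul_smul_comm, Matrix.smul_mulVec, Matrix.mulVec_smul] }
    have hG := (LinearMap.toContinuousLinearMap G).hasFDerivAt
      (x := NormedSpace.exp (t • M))
    have hd := hG.comp_hasDerivAt t (hasDerivAt_exp_smul_const' M t)
    exact hd
  have base : ∀ t : ℝ, B *ᵥ (NormedSpace.exp (t • A) *ᵥ x₀)
      = A *ᵥ (NormedSpace.exp (t • A) *ᵥ x₀) := by
    intro t
    have dB := key 1 1 t B
    have dA := key 1 1 t A
    simp only [one_mul, Matrix.one_mulVec] at dB dA
    have hfe : (fun u : ℝ => NormedSpace.exp (u • B) *ᵥ x₀)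
        = fun u : ℝ => NormedSpace.exp (u • A) *ᵥ x₀ := funext htraj
    rw [hfe] at dB
    have heq := dB.unique dA
    calc B *ᵥ (NormedSpace.exp (t • A) *ᵥ x₀)
        = B *ᵥ (NormedSpace.exp (t • B) *ᵥ x₀) := by rw [htraj t]
      _ = (B * NormedSpace.exp (t • B)) *ᵥ x₀ := Matrix.mulVec_mulVec x₀ B _
      _ = (A * NormedSpace.exp (t • A)) *ᵥ x₀ := heq
      _ = A *ᵥ (NormedSpace.exp (t • A) *ᵥ x₀) := (Matrix.mulVec_mulVec x₀ A _).symm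
  have hstep : ∀ (k : ℕ) (t : ℝ), B *ᵥ ((A ^ k * NormedSpace.exp (t • A)) *ᵥ x₀)
      = (A ^ (k + 1) * NormedSpace.exp (t • A)) *ᵥ x₀ := by
    intro k
    induction k with
    | zero =>
        intro t
        rw [pow_zero, one_mul, pow_one, ← Matrix.mulVec_mulVec]
        exact base t
    | succ k ih =>
        intro t
        have hfe2 : (fun u : ℝ => B *ᵥ ((A ^ k * NormedSpace.exp (u • A)) *ᵥ x₀))
            = fun u : ℝ => (A ^ (k + 1) * NormedSpace.exp (u • A)) *ᵥ x₀ := funext ih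
        have dL := key B (A ^ k) t A
        rw [hfe2] at dL
        have dR := key 1 (A ^ (k + 1)) t A
        simp only [Matrix.one_mulVec] at dR
        have heq := dL.unique dR
        rw [← mul_assoc, ← pow_succ, ← mul_assoc, ← pow_succ] at heq
        exact heq
  have h0 : ∀ k : ℕ, B *ᵥ ((A ^ k) *ᵥ x₀) = (A ^ (k + 1)) *ᵥ x₀ := by
    intro k
    have := hstep k 0
    rwa [zero_smul, NormedSpace.exp_zero, mul_one, mul_one] at this
  have hBA0 : B - A = 0 := by
    have hker : Submodule.span ℝ (Set.range fun k : ℕ => (A ^ k) *ᵥ x₀)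
        ≤ LinearMap.ker (B - A).mulVecLin := by
      rw [Submodule.span_le]
      rintro x ⟨k, rfl⟩
      rw [SetLike.mem_coe, LinearMap.mem_ker]
      show (B - A) *ᵥ ((A ^ k) *ᵥ x₀) = 0
      rw [Matrix.sub_mulVec, h0 k, Matrix.mulVec_mulVec, ← pow_succ', sub_self]
    rw [hsp, top_le_iff] at hker
    have hz : (B - A).mulVecLin = 0 := LinearMap.ker_eq_top.1 hker
    ext i j
    have hz2 : (B - A) *ᵥ Pi.single j 1 = 0 := by
      have := LinearMap.congr_fun hz (Pi.single j 1)
      exact this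
    rw [Matrix.mulVec_single] at hz2
    simpa using congrFun hz2 i
  exact sub_eq_zero.1 hBA0

end UnidentAux
end ExpLemmas

section Main

open Matrix Module
namespace UnidentAux

lemma eq_zero_of_dot_span {n : ℕ} {w : Fin n → ℂ} {S : Set (Fin n → ℂ)}
    (hS : Submodule.span ℂ S = ⊤) (h0 : ∀ s ∈ S, w ⬝ᵥ s = 0) : w = 0 := by
  let f : (Fin n → ℂ) →ₗ[ℂ] ℂ :=
    { toFun := fun x => w ⬝ᵥ x
      map_add' := fun a b => dotProduct_add w a b
      map_smul' := fun c a => by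
        show w ⬝ᵥ (c • a) = c * (w ⬝ᵥ a)
        rw [dotProduct_smul, smul_eq_mul] }
  have hker : Submodule.span ℂ S ≤ LinearMap.ker f := by
    rw [Submodule.span_le]
    intro s hs
    rw [SetLike.mem_coe, LinearMap.mem_ker]
    exact h0 s hs
  rw [hS, top_le_iff] at hker
  funext j
  have : f (Pi.single j 1) = 0 := by
    rw [← LinearMap.mem_ker, hker]; trivial
  have h2 : w ⬝ᵥ Pi.single j 1 = 0 := this
  rw [dotProduct_single, mul_one] at h2
  exact h2

lemma dot_pow_mulVec {n : ℕ} {Mc : Matrix (Fin n) (Fin n) ℂ} {lam : ℂ} {φ : Fin n → ℂ}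
    (hφ : Mcᵀ *ᵥ φ = lam • φ) (y : Fin n → ℂ) (k : ℕ) :
    φ ⬝ᵥ ((Mc ^ k) *ᵥ y) = lam ^ k * (φ ⬝ᵥ y) := by
  induction k with
  | zero => simp
  | succ k ih =>
      rw [pow_succ', ← Matrix.mulVec_mulVec]
      calc φ ⬝ᵥ (Mc *ᵥ ((Mc ^ k) *ᵥ y)) = (φ ᵥ* Mc) ⬝ᵥ ((Mc ^ k) *ᵥ y) :=
            dotProduct_mulVec _ _ _
        _ = (Mcᵀ *ᵥ φ) ⬝ᵥ ((Mc ^ k) *ᵥ y) := by rw [Matrix.mulVec_transpose]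
        _ = (lam • φ) ⬝ᵥ ((Mc ^ k) *ᵥ y) := by rw [hφ]
        _ = lam * (φ ⬝ᵥ ((Mc ^ k) *ᵥ y)) := by rw [smul_dotProduct, smul_eq_mul]
        _ = lam ^ (k + 1) * (φ ⬝ᵥ y) := by rw [ih]; ring

lemma mulVecLin_pow_apply {n : ℕ} (Mc : Matrix (Fin n) (Fin n) ℂ) (k : ℕ) (y : Fin n → ℂ) :
    ((Matrix.mulVecLin Mc) ^ k) y = (Mc ^ k) *ᵥ y := by
  induction k with
  | zero => simp
  | succ k ih =>
      rw [pow_succ', Module.End.mul_apply, ih, Matrix.mulVecLin_apply, Matrix.mulVec_mulVec,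
        ← pow_succ']

lemma finrank_pi_fin (n : ℕ) : Module.finrank ℂ (Fin n → ℂ) = n := by
  rw [Module.finrank_fintype_fun_eq_card, Fintype.card_fin]

end UnidentAux
end Main

section MainProof

open Matrix Module Polynomial
namespace UnidentAux

/-- Backward direction: low rank shift implies globally unidentifiable. -/
lemma backward {n : ℕ} (A : Matrix (Fin n) (Fin n) ℝ) (lam : ℂ)
    (hlam : (A.map (Complex.ofReal) - lam • (1 : Matrix (Fin n) (Fin n) ℂ)).rank + 2 ≤ n)
    (hn : 1 ≤ n) : GloballyUnidentifiable A := by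
  classical
  intro x₀ hid
  have hspanR := span_eq_top_of_identifiable hn A x₀ hid
  set Mc := A.map (Complex.ofReal) with hMc
  have hspanC : Submodule.span ℂ (Set.range fun k : ℕ => (Mc ^ k) *ᵥ cvec x₀) = ⊤ := by
    have h1 := span_top_complexify hspanR
    have him : cvec '' (Set.range fun k : ℕ => (A ^ k) *ᵥ x₀)
        = Set.range fun k : ℕ => (Mc ^ k) *ᵥ cvec x₀ := by
      ext y
      constructor
      · rintro ⟨x, ⟨k, rfl⟩, rfl⟩
        exact ⟨k, cvec_pow_mulVec A x₀ k⟩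
      · rintro ⟨k, rfl⟩
        exact ⟨(A ^ k) *ᵥ x₀, ⟨k, rfl⟩, (cvec_pow_mulVec A x₀ k).symm⟩
    rwa [him] at h1
  set N := (Mc - lam • 1)ᵀ with hNdef
  have hkerdim : 2 ≤ Module.finrank ℂ (LinearMap.ker N.mulVecLin) := by
    have hrn := LinearMap.finrank_range_add_finrank_ker N.mulVecLin
    rw [finrank_pi_fin n] at hrn
    have hrank : N.rank = (Mc - lam • 1).rank := Matrix.rank_transpose _
    have hdef : N.rank = Module.finrank ℂ (LinearMap.range N.mulVecLin) := rfl
    omega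
  set b := Module.finBasis ℂ ↥(LinearMap.ker N.mulVecLin) with hb
  set i0 : Fin (Module.finrank ℂ ↥(LinearMap.ker N.mulVecLin)) := ⟨0, by omega⟩ with hi0
  set i1 : Fin (Module.finrank ℂ ↥(LinearMap.ker N.mulVecLin)) := ⟨1, by omega⟩ with hi1
  have hi01 : i0 ≠ i1 := by
    intro h
    have := congrArg Fin.val h
    simp [hi0, hi1] at this
  set φ : Fin n → ℂ := (b i0 : Fin n → ℂ) with hφdef
  set ψ : Fin n → ℂ := (b i1 : Fin n → ℂ) with hψdef
  have hli : ∀ s t : ℂ, s • φ + t • ψ = 0 → s = 0 ∧ t = 0 := by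
    intro s t hst
    have hsub : s • b i0 + t • b i1 = (0 : ↥(LinearMap.ker N.mulVecLin)) := by
      apply Subtype.ext
      rw [Submodule.coe_add, SetLike.val_smul, SetLike.val_smul]
      exact hst
    have hli' := b.linearIndependent
    rw [Fintype.linearIndependent_iff] at hli'
    set g : Fin (Module.finrank ℂ ↥(LinearMap.ker N.mulVecLin)) → ℂ :=
      fun i => if i = i0 then s else if i = i1 then t else 0 with hg
    have hgsum : ∑ i, g i • b i = 0 := by
      have hsplit : ∑ i, g i • b i = ∑ i ∈ ({i0, i1} : Finset _), g i • b i := by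
        symm
        apply Finset.sum_subset (Finset.subset_univ _)
        intro i _ hi
        simp only [Finset.mem_insert, Finset.mem_singleton, not_or] at hi
        rw [hg]
        simp [hi.1, hi.2]
      rw [hsplit, Finset.sum_pair hi01]
      have hg0 : g i0 = s := by simp [hg]
      have hg1 : g i1 = t := by simp [hg, hi01.symm]
      rw [hg0, hg1]
      exact hsub
    have hres := fun i => hli' g hgsum i
    constructor
    · have := hres i0; simpa [hg] using this
    · have := hres i1; simpa [hg, hi01.symm] using this
  have heig : ∀ v : ↥(LinearMap.ker N.mulVecLin), Mcᵀ *ᵥ (v : Fin n → ℂ) = lam • (v : Fin n → ℂ) := by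
    intro v
    have hmem := v.2
    rw [LinearMap.mem_ker] at hmem
    have hNv : N *ᵥ (v : Fin n → ℂ) = 0 := hmem
    have hexp : N *ᵥ (v : Fin n → ℂ) = Mcᵀ *ᵥ (v : Fin n → ℂ) - lam • (v : Fin n → ℂ) := by
      show (Mc - lam • 1)ᵀ *ᵥ (v : Fin n → ℂ)
          = Mcᵀ *ᵥ (v : Fin n → ℂ) - lam • (v : Fin n → ℂ)
      rw [Matrix.transpose_sub, Matrix.sub_mulVec, Matrix.transpose_smul,
        Matrix.transpose_one, Matrix.smul_mulVec, Matrix.one_mulVec]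
    rw [hexp] at hNv
    exact sub_eq_zero.1 hNv
  have hφeig := heig (b i0)
  have hψeig := heig (b i1)
  set a1 : ℂ := φ ⬝ᵥ cvec x₀ with ha1
  set a2 : ℂ := ψ ⬝ᵥ cvec x₀ with ha2
  set χ : Fin n → ℂ := a1 • ψ - a2 • φ with hχ
  have hχ0 : χ = 0 := by
    apply eq_zero_of_dot_span hspanC
    rintro s ⟨k, rfl⟩
    rw [hχ, sub_dotProduct, smul_dotProduct, smul_dotProduct,
      dot_pow_mulVec hφeig, dot_pow_mulVec hψeig, ← ha1, ← ha2, smul_eq_mul, smul_eq_mul]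
    ring
  have hcomb : (-a2) • φ + a1 • ψ = a1 • ψ - a2 • φ := by
    rw [neg_smul]; abel
  have hcoef := hli (-a2) a1 (by rw [hcomb, ← hχ]; exact hχ0)
  have ha10 : a1 = 0 := hcoef.2
  have hφzero : φ = 0 := by
    apply eq_zero_of_dot_span hspanC
    rintro s ⟨k, rfl⟩
    rw [dot_pow_mulVec hφeig, ← ha1, ha10, mul_zero]
  exact b.ne_zero i0 (Submodule.coe_eq_zero.1 hφzero)

end UnidentAux
end MainProof

section Forward

open Matrix Module Polynomial
namespace UnidentAux

lemma forward {n : ℕ} (hn : 1 ≤ n) (A : Matrix (Fin n) (Fin n) ℝ)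
    (hGU : GloballyUnidentifiable A)
    (hno : ∀ lam : ℂ,
      n < (A.map (Complex.ofReal) - lam • (1 : Matrix (Fin n) (Fin n) ℂ)).rank + 2) :
    False := by
  classical
  set Mc := A.map (Complex.ofReal) with hMc
  set f : Module.End ℂ (Fin n → ℂ) := Matrix.mulVecLin Mc with hf
  have hEig : ∀ μ : ℂ, Module.finrank ℂ (f.eigenspace μ) ≤ 1 := by
    intro μ
    have hfeq : f - μ • 1 = (Mc - μ • 1).mulVecLin := by
      apply LinearMap.ext
      intro y
      rw [LinearMap.sub_apply, Matrix.mulVecLin_apply, Matrix.mulVecLin_apply,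
        Matrix.sub_mulVec, Matrix.smul_mulVec, Matrix.one_mulVec]
      rfl
    have heq : f.eigenspace μ = LinearMap.ker (Mc - μ • 1).mulVecLin := by
      rw [Module.End.eigenspace_def, hfeq]
    have hrn := LinearMap.finrank_range_add_finrank_ker (Mc - μ • 1).mulVecLin
    rw [finrank_pi_fin n] at hrn
    have hdef : (Mc - μ • 1).rank = Module.finrank ℂ (LinearMap.range (Mc - μ • 1).mulVecLin) :=
      rfl
    have hμ := hno μ
    rw [heq]
    omega
  obtain ⟨v, hv⟩ := exists_cyclic f hEig
  rw [kry_eq_span_fin, finrank_pi_fin n] at hv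
  have hvfun : (fun i : Fin n => (f ^ (i : ℕ)) v) = fun i : Fin n => (Mc ^ (i : ℕ)) *ᵥ v := by
    funext i
    exact mulVecLin_pow_apply Mc (i : ℕ) v
  rw [hvfun] at hv
  have hdet := (span_range_eq_top_iff_det (fun j : Fin n => (Mc ^ (j : ℕ)) *ᵥ v)).1 hv
  -- decompose v into real and imaginary parts
  set u : Fin n → ℝ := fun i => (v i).re with hu
  set w2 : Fin n → ℝ := fun i => (v i).im with hw2
  have hvdec : cvec u + Complex.I • cvec w2 = v := by
    funext i
    show ((v i).re : ℂ) + Complex.I * ((v i).im : ℂ) = v i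
    rw [mul_comm]
    exact Complex.re_add_im (v i)
  -- the determinant as a polynomial in one variable
  set q : Polynomial ℂ := (Matrix.of fun i j : Fin n =>
      C (((Mc ^ (j : ℕ)) *ᵥ cvec u) i) + X * C (((Mc ^ (j : ℕ)) *ᵥ cvec w2) i)).det with hq
  have heval : ∀ z : ℂ, Polynomial.eval z q
      = (Matrix.of fun i j : Fin n => ((Mc ^ (j : ℕ)) *ᵥ (cvec u + z • cvec w2)) i).det := by
    intro z
    have h1 : Polynomial.eval z q = (Polynomial.evalRingHom z) q := rfl
    rw [h1, hq, RingHom.map_det]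
    congr 1
    funext i j
    show Polynomial.eval z (C (((Mc ^ (j : ℕ)) *ᵥ cvec u) i)
        + X * C (((Mc ^ (j : ℕ)) *ᵥ cvec w2) i)) = ((Mc ^ (j : ℕ)) *ᵥ (cvec u + z • cvec w2)) i
    rw [Matrix.mulVec_add, Matrix.mulVec_smul, Pi.add_apply, Pi.smul_apply, smul_eq_mul,
      Polynomial.eval_add, Polynomial.eval_mul, Polynomial.eval_C, Polynomial.eval_X,
      Polynomial.eval_C]
  have hqI : Polynomial.eval Complex.I q ≠ 0 := by
    rw [heval, hvdec]
    exact hdet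
  have hq0 : q ≠ 0 := by
    intro h0
    apply hqI
    rw [h0, Polynomial.eval_zero]
  have hfin : {z : ℂ | q.IsRoot z}.Finite := q.finite_setOf_isRoot hq0
  have hfinR : ((fun t : ℝ => (t : ℂ)) ⁻¹' {z : ℂ | q.IsRoot z}).Finite :=
    Set.Finite.preimage (Complex.ofReal_injective.injOn) hfin
  obtain ⟨t, ht⟩ := (hfinR.infinite_compl).nonempty
  have htne : Polynomial.eval ((t : ℝ) : ℂ) q ≠ 0 := ht
  set x₀ : Fin n → ℝ := u + t • w2 with hx₀
  have hcv : cvec u + (t : ℂ) • cvec w2 = cvec x₀ := by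
    funext l
    show (u l : ℂ) + (t : ℂ) * (w2 l : ℂ) = ((u l + t * w2 l : ℝ) : ℂ)
    push_cast
    ring
  have hdetR : (Matrix.of fun i j : Fin n => ((A ^ (j : ℕ)) *ᵥ x₀) i).det ≠ 0 := by
    intro h0
    apply htne
    rw [heval, hcv]
    have hmatch : (Matrix.of fun i j : Fin n => ((Mc ^ (j : ℕ)) *ᵥ cvec x₀) i)
        = (Matrix.of fun i j : Fin n => ((A ^ (j : ℕ)) *ᵥ x₀) i).map Complex.ofReal := by
      funext i j
      show ((Mc ^ (j : ℕ)) *ᵥ cvec x₀) i = Complex.ofReal ((Matrix.of fun i j : Fin n =>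
        ((A ^ (j : ℕ)) *ᵥ x₀) i) i j)
      rw [hMc, cvec_pow_mulVec]
      rfl
    rw [hmatch]
    have hdet2 : ((Matrix.of fun i j : Fin n => ((A ^ (j : ℕ)) *ᵥ x₀) i).map
        Complex.ofReal).det = Complex.ofReal
          ((Matrix.of fun i j : Fin n => ((A ^ (j : ℕ)) *ᵥ x₀) i).det) :=
      (RingHom.map_det Complex.ofRealHom _).symm
    rw [hdet2, h0]
    simp
  have hspanR := (span_range_eq_top_iff_det (fun j : Fin n => (A ^ (j : ℕ)) *ᵥ x₀)).2 hdetR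
  have hspanAll : Submodule.span ℝ (Set.range fun k : ℕ => (A ^ k) *ᵥ x₀) = ⊤ := by
    rw [eq_top_iff, ← hspanR]
    apply Submodule.span_mono
    rintro y ⟨i, rfl⟩
    exact ⟨(i : ℕ), rfl⟩
  exact hGU x₀ (identifiable_of_span_eq_top A x₀ hspanAll)

end UnidentAux
end Forward

/-- A real `n × n` matrix (`n ≥ 1`) is globally unidentifiable iff there is a complex
number `λ` such that the rank over `ℂ` of `A - λ I` is at most `n - 2` (i.e. some
eigenvalue of `A` has geometric multiplicity at least `2`). -/
theorem globally_unidentifiable_iff_rank_shift_le (n : ℕ) (hn : 1 ≤ n)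
    (A : Matrix (Fin n) (Fin n) ℝ) :
    GloballyUnidentifiable A ↔
      ∃ lam : ℂ,
        (A.map (Complex.ofReal) - lam • (1 : Matrix (Fin n) (Fin n) ℂ)).rank + 2 ≤ n := by
  constructor
  · intro hGU
    by_contra hno
    push_neg at hno
    exact UnidentAux.forward hn A hGU hno
  · rintro ⟨lam, hlam⟩
    exact UnidentAux.backward A lam hlam hn
end

section
/- Let n ≥ 1, A ∈ ℝ^{n×n}, and x₀ ∈ ℝⁿ. Then A is identifiable from x₀ if and only if x₀ is not contained in any proper A-invariant linear subspace of ℝⁿ (i.e., there is no linear subspace V ⊊ ℝⁿ with A V ⊆ V and x₀ ∈ V). -/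
open MeasureTheory

section Aux

open Matrix NormedSpace

attribute [local instance] Matrix.linftyOpNormedAddCommGroup Matrix.linftyOpNormedRing
  Matrix.linftyOpNormedAlgebra

/-- `M ↦ (M * X₀) *ᵥ x₀` as a continuous linear map. -/
noncomputable def mulVecCLM {n : ℕ} (P : Matrix (Fin n) (Fin n) ℝ) (x₀ : Fin n → ℝ) :
    Matrix (Fin n) (Fin n) ℝ →L[ℝ] (Fin n → ℝ) :=
  LinearMap.toContinuousLinearMap
    { toFun := fun X => (P * X) *ᵥ x₀
      map_add' := fun X Y => by
        show (P * (X + Y)) *ᵥ x₀ = (P * X) *ᵥ x₀ + (P * Y) *ᵥ x₀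
        rw [mul_add, Matrix.add_mulVec]
      map_smul' := fun c X => by
        show (P * (c • X)) *ᵥ x₀ = c • ((P * X) *ᵥ x₀)
        rw [mul_smul_comm, Matrix.smul_mulVec] }

lemma mulVecCLM_apply {n : ℕ} (P X : Matrix (Fin n) (Fin n) ℝ) (x₀ : Fin n → ℝ) :
    mulVecCLM P x₀ X = (P * X) *ᵥ x₀ := rfl

/-- Power–series expansion of the trajectory. -/
lemma exp_smul_mulVec {n : ℕ} (A : Matrix (Fin n) (Fin n) ℝ) (x₀ : Fin n → ℝ) (t : ℝ) :
    (NormedSpace.exp (t • A)) *ᵥ x₀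
      = ∑' k : ℕ, (((k.factorial : ℝ))⁻¹ * t ^ k) • ((A ^ k) *ᵥ x₀) := by
  have hsum := NormedSpace.expSeries_summable' (𝕂 := ℝ) (t • A)
  have hmap := (mulVecCLM (1 : Matrix (Fin n) (Fin n) ℝ) x₀).map_tsum hsum
  rw [NormedSpace.exp_eq_tsum (𝕂 := ℝ)]
  calc (∑' k : ℕ, (((k.factorial : ℝ))⁻¹) • (t • A) ^ k) *ᵥ x₀
      = mulVecCLM 1 x₀ (∑' k : ℕ, (((k.factorial : ℝ))⁻¹) • (t • A) ^ k) := by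
        rw [mulVecCLM_apply, one_mul]
    _ = ∑' k : ℕ, mulVecCLM 1 x₀ ((((k.factorial : ℝ))⁻¹) • (t • A) ^ k) := hmap
    _ = ∑' k : ℕ, (((k.factorial : ℝ))⁻¹ * t ^ k) • ((A ^ k) *ᵥ x₀) := by
        refine tsum_congr fun k => ?_
        rw [_root_.map_smul, mulVecCLM_apply, one_mul, smul_pow, Matrix.smul_mulVec,
          smul_smul]

/-- Derivative of `u ↦ (M ^ k * exp (u • M)) *ᵥ x₀`. -/
lemma hasDerivAt_pow_mul_exp_mulVec {n : ℕ} (M : Matrix (Fin n) (Fin n) ℝ)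
    (x₀ : Fin n → ℝ) (k : ℕ) (t : ℝ) :
    HasDerivAt (fun u : ℝ => ((M ^ k) * NormedSpace.exp (u • M)) *ᵥ x₀)
      (((M ^ (k + 1)) * NormedSpace.exp (t • M)) *ᵥ x₀) t := by
  have hexp : HasDerivAt (fun u : ℝ => NormedSpace.exp (u • M))
      (M * NormedSpace.exp (t • M)) t := hasDerivAt_exp_smul_const' M t
  have := ((mulVecCLM (M ^ k) x₀).hasFDerivAt).comp_hasDerivAt t hexp
  have h2 : HasDerivAt (fun u : ℝ => ((M ^ k) * NormedSpace.exp (u • M)) *ᵥ x₀)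
      (((M ^ k) * (M * NormedSpace.exp (t • M))) *ᵥ x₀) t := this
  rwa [← mul_assoc, ← pow_succ] at h2

/-- If two matrices generate the same trajectory, all power coefficients agree. -/
lemma pow_mulVec_eq_of_traj {n : ℕ} {A B : Matrix (Fin n) (Fin n) ℝ} {x₀ : Fin n → ℝ}
    (h : ∀ t : ℝ, (NormedSpace.exp (t • B)) *ᵥ x₀ = (NormedSpace.exp (t • A)) *ᵥ x₀)
    (k : ℕ) : (B ^ k) *ᵥ x₀ = (A ^ k) *ᵥ x₀ := by
  have key : ∀ k : ℕ, ∀ t : ℝ,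
      ((B ^ k) * NormedSpace.exp (t • B)) *ᵥ x₀
        = ((A ^ k) * NormedSpace.exp (t • A)) *ᵥ x₀ := by
    intro k
    induction k with
    | zero => intro t; simpa using h t
    | succ k ih =>
      intro t
      have hB := hasDerivAt_pow_mul_exp_mulVec B x₀ k t
      have hA := hasDerivAt_pow_mul_exp_mulVec A x₀ k t
      have hfun : (fun u : ℝ => ((B ^ k) * NormedSpace.exp (u • B)) *ᵥ x₀)
          = fun u : ℝ => ((A ^ k) * NormedSpace.exp (u • A)) *ᵥ x₀ := funext ih
      rw [hfun] at hB
      exact hB.unique hA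
  have := key k 0
  simpa [NormedSpace.exp_zero] using this

end Aux

open Matrix in
/-- `A` is identifiable from `x₀` iff `x₀` is not contained in any proper
`A`-invariant linear subspace of `ℝⁿ`. -/
theorem identifiableFrom_iff_not_mem_proper_invariant_subspace (n : ℕ) (hn : 1 ≤ n)
    (A : Matrix (Fin n) (Fin n) ℝ) (x₀ : Fin n → ℝ) :
    IdentifiableFrom A x₀ ↔
      ¬ ∃ V : Submodule ℝ (Fin n → ℝ), V ≠ ⊤ ∧ (∀ v ∈ V, A.mulVec v ∈ V) ∧ x₀ ∈ V := by
  constructor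
  · -- identifiable → no proper invariant subspace containing x₀
    intro hid
    rintro ⟨V, hVne, hVinv, hx₀V⟩
    apply hid
    -- a linear functional vanishing on V
    obtain ⟨φ, hφ0, hφmap⟩ :=
      Submodule.exists_dual_map_eq_bot_of_lt_top (lt_top_iff_ne_top.mpr hVne) inferInstance
    have hφV : ∀ v ∈ V, φ v = 0 := by
      intro v hv
      have : φ v ∈ V.map φ := Submodule.mem_map_of_mem hv
      rw [hφmap, Submodule.mem_bot] at this
      exact this
    set i₀ : Fin n := ⟨0, hn⟩ with hi₀
    -- perturbation matrix
    set d : Fin n → ℝ := fun i => if i = i₀ then 1 else 0 with hd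
    set C : Matrix (Fin n) (Fin n) ℝ :=
      Matrix.of (fun i j => d i * φ (fun k => if j = k then 1 else 0)) with hC
    have hCmul : ∀ v : Fin n → ℝ, C *ᵥ v = φ v • d := by
      intro v
      ext i
      rw [Pi.smul_apply, LinearMap.pi_apply_eq_sum_univ φ v]
      simp only [hC, Matrix.mulVec, dotProduct, Matrix.of_apply, smul_eq_mul,
        Finset.sum_mul]
      refine Finset.sum_congr rfl fun j _ => ?_
      ring
    -- B := A + C agrees with A on V
    refine ⟨A + C, ?_, ?_⟩
    · -- B ≠ A
      have hne : ∃ j, φ (fun k => if j = k then 1 else 0) ≠ 0 := by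
        by_contra hall
        push_neg at hall
        refine hφ0 (LinearMap.ext fun v => ?_)
        rw [LinearMap.pi_apply_eq_sum_univ φ v]
        simp [hall]
      obtain ⟨j, hj⟩ := hne
      intro hBA
      have : C = 0 := by
        have := congrArg (fun M => M - A) hBA
        simpa [add_sub_cancel_left] using this
      apply hj
      have := congrFun (congrFun this i₀) j
      simpa [hC, hd] using this
    · -- equal trajectories
      have hpow : ∀ k : ℕ, (A ^ k) *ᵥ x₀ ∈ V ∧ ((A + C) ^ k) *ᵥ x₀ = (A ^ k) *ᵥ x₀ := by
        intro k
        induction k with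
        | zero => simpa using hx₀V
        | succ k ih =>
          obtain ⟨hmem, heq⟩ := ih
          constructor
          · rw [pow_succ', ← Matrix.mulVec_mulVec]
            exact hVinv _ hmem
          · rw [pow_succ', pow_succ', ← Matrix.mulVec_mulVec, ← Matrix.mulVec_mulVec, heq,
              Matrix.add_mulVec, hCmul, hφV _ hmem, zero_smul, add_zero]
      intro t
      rw [exp_smul_mulVec, exp_smul_mulVec]
      exact tsum_congr fun k => by rw [(hpow k).2]
  · -- no proper invariant subspace containing x₀ → identifiable
    intro hV h
    obtain ⟨B, hBne, htraj⟩ := h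
    have hk : ∀ k : ℕ, (B ^ k) *ᵥ x₀ = (A ^ k) *ᵥ x₀ := pow_mulVec_eq_of_traj htraj
    set V : Submodule ℝ (Fin n → ℝ) :=
      Submodule.span ℝ (Set.range fun k : ℕ => (A ^ k) *ᵥ x₀) with hVdef
    have hx₀V : x₀ ∈ V := Submodule.subset_span ⟨0, by simp⟩
    have hinv : ∀ v ∈ V, A *ᵥ v ∈ V := by
      intro v hv
      induction hv using Submodule.span_induction with
      | mem x hx =>
        obtain ⟨k, rfl⟩ := hx
        show A *ᵥ (A ^ k *ᵥ x₀) ∈ V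
        rw [Matrix.mulVec_mulVec, ← pow_succ']
        exact Submodule.subset_span ⟨k + 1, rfl⟩
      | zero => simp
      | add x y hx hy ihx ihy => rw [Matrix.mulVec_add]; exact V.add_mem ihx ihy
      | smul a x hx ihx => rw [Matrix.mulVec_smul]; exact V.smul_mem a ihx
    have hBAonV : ∀ v ∈ V, B *ᵥ v = A *ᵥ v := by
      intro v hv
      induction hv using Submodule.span_induction with
      | mem x hx =>
        obtain ⟨k, rfl⟩ := hx
        show B *ᵥ (A ^ k *ᵥ x₀) = A *ᵥ (A ^ k *ᵥ x₀)
        calc B *ᵥ (A ^ k *ᵥ x₀) = B *ᵥ (B ^ k *ᵥ x₀) := by rw [hk k]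
          _ = B ^ (k + 1) *ᵥ x₀ := by rw [Matrix.mulVec_mulVec, ← pow_succ']
          _ = A ^ (k + 1) *ᵥ x₀ := hk (k + 1)
          _ = A *ᵥ (A ^ k *ᵥ x₀) := by rw [Matrix.mulVec_mulVec, ← pow_succ']
      | zero => simp
      | add x y hx hy ihx ihy => rw [Matrix.mulVec_add, Matrix.mulVec_add, ihx, ihy]
      | smul a x hx ihx => rw [Matrix.mulVec_smul, Matrix.mulVec_smul, ihx]
    have hVne : V ≠ ⊤ := by
      intro htop
      apply hBne
      have hall : ∀ v : Fin n → ℝ, B *ᵥ v = A *ᵥ v := fun v =>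
        hBAonV v (htop ▸ Submodule.mem_top)
      ext i j
      have := congrFun (hall (Pi.single j 1)) i
      simpa using this
    exact hV ⟨V, hVne, hinv, hx₀V⟩
end

section
/- Let n ≥ 2 and let A be a sparse-continuous n×n random matrix with sparsity level p ∈ [0,1]. Then the probability that A is globally unidentifiable is at least 1 - (1 - pⁿ)ⁿ - n·pⁿ·(1 - pⁿ)^{n-1}; that is, ℙ(for every x₀ ∈ ℝⁿ there exists B ∈ ℝ^{n×n} with B ≠ A and exp(tB) x₀ = exp(tA) x₀ for all t ∈ ℝ) ≥ 1 - (1 - pⁿ)ⁿ - n·pⁿ·(1 - pⁿ)^{n-1}. -/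
open MeasureTheory ProbabilityTheory

/-- `A` is a *sparse-continuous* random matrix with sparsity level `p`: its entries are
`A ω i j = B (i,j) ω * X (i,j) ω` where the `B`'s and `X`'s are jointly independent,
each `B s` is Bernoulli with `P (B s = 1) = 1 - p`, and each `X s` is a real random
variable whose law is absolutely continuous w.r.t. Lebesgue measure on `ℝ`. -/
def IsSparseContinuous {Ω : Type*} [MeasurableSpace Ω] (P : MeasureTheory.Measure Ω) {n : ℕ}
    (A : Ω → Matrix (Fin n) (Fin n) ℝ) (p : ℝ) : Prop :=
  ∃ B X : Fin n × Fin n → Ω → ℝ,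
    (∀ ω i j, A ω i j = B (i, j) ω * X (i, j) ω) ∧
    (∀ s ω, B s ω = 0 ∨ B s ω = 1) ∧
    (∀ s, P {ω | B s ω = 1} = ENNReal.ofReal (1 - p)) ∧
    (∀ s, P {ω | B s ω = 0} = ENNReal.ofReal p) ∧
    (∀ s, Measurable (B s)) ∧ (∀ s, Measurable (X s)) ∧
    (∀ s, P.map (X s) ≪ MeasureTheory.volume) ∧
    ProbabilityTheory.iIndepFun
      (Sum.elim B X) P


open Matrix

lemma exp_mulVec_congr {n : ℕ} (A B : Matrix (Fin n) (Fin n) ℝ) (x : Fin n → ℝ)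
    (h : ∀ m : ℕ, A ^ m *ᵥ x = B ^ m *ᵥ x) :
    (NormedSpace.exp A).mulVec x = (NormedSpace.exp B).mulVec x := by
  letI : SeminormedRing (Matrix (Fin n) (Fin n) ℝ) := Matrix.linftyOpSemiNormedRing
  letI : NormedRing (Matrix (Fin n) (Fin n) ℝ) := Matrix.linftyOpNormedRing
  letI : NormedAlgebra ℝ (Matrix (Fin n) (Fin n) ℝ) := Matrix.linftyOpNormedAlgebra
  let L : Matrix (Fin n) (Fin n) ℝ →ₗ[ℝ] (Fin n → ℝ) :=
    { toFun := fun M => M *ᵥ x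
      map_add' := fun M N => Matrix.add_mulVec M N x
      map_smul' := fun c M => Matrix.smul_mulVec c M x }
  let L' : Matrix (Fin n) (Fin n) ℝ →L[ℝ] (Fin n → ℝ) := LinearMap.toContinuousLinearMap L
  have hA := (NormedSpace.exp_series_hasSum_exp' (𝕂 := ℝ) A).mapL L'
  have hB := (NormedSpace.exp_series_hasSum_exp' (𝕂 := ℝ) B).mapL L'
  have heq : (fun k : ℕ => L' (((k.factorial : ℝ))⁻¹ • A ^ k))
      = fun k : ℕ => L' (((k.factorial : ℝ))⁻¹ • B ^ k) := by
    funext k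
    simp only [_root_.map_smul]
    congr 1
    exact h k
  rw [heq] at hA
  exact hA.unique hB

lemma gu_of_two_zero_cols {n : ℕ} (A : Matrix (Fin n) (Fin n) ℝ) {j k : Fin n}
    (hjk : j ≠ k) (hj : ∀ i, A i j = 0) (hk : ∀ i, A i k = 0) :
    GloballyUnidentifiable A := by
  intro x₀
  rw [IdentifiableFrom, not_not]
  -- find a nonzero functional vanishing on x₀ and all columns of A
  classical
  let Ψ : Module.Dual ℝ (Fin n → ℝ) →ₗ[ℝ] ({l : Fin n // l ≠ j} → ℝ) :=
    LinearMap.pi (fun l => Module.Dual.eval ℝ (Fin n → ℝ)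
      (if l.1 = k then x₀ else Aᵀ l.1))
  have hrank : LinearMap.ker Ψ ≠ ⊥ := by
    apply LinearMap.ker_ne_bot_of_finrank_lt
    rw [Subspace.dual_finrank_eq]
    simp only [Module.finrank_pi]
    rw [Fintype.card_subtype_compl, Fintype.card_fin, Fintype.card_subtype_eq]
    exact Nat.sub_lt j.pos one_pos
  obtain ⟨φ, hφker, hφne⟩ := (Submodule.ne_bot_iff _).1 hrank
  have hcomp : ∀ l : {l : Fin n // l ≠ j}, φ (if l.1 = k then x₀ else Aᵀ l.1) = 0 := by
    intro l
    have := congrFun (LinearMap.mem_ker.1 hφker) l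
    simpa [Ψ] using this
  have hx₀ : φ x₀ = 0 := by
    have := hcomp ⟨k, hjk.symm⟩
    simpa using this
  have hcol : ∀ l, φ (Aᵀ l) = 0 := by
    intro l
    by_cases hlj : l = j
    · have : Aᵀ l = 0 := by funext i; simp [hlj, Matrix.transpose_apply, hj i]
      rw [this, map_zero]
    · by_cases hlk : l = k
      · have : Aᵀ l = 0 := by funext i; simp [hlk, Matrix.transpose_apply, hk i]
        rw [this, map_zero]
      · have := hcomp ⟨l, hlj⟩
        simpa [hlk] using this
  have hAy : ∀ y : Fin n → ℝ, φ (A *ᵥ y) = 0 := by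
    intro y
    have hdecomp : A *ᵥ y = ∑ l, y l • Aᵀ l := by
      funext i
      simp only [Matrix.mulVec, dotProduct, Finset.sum_apply, Pi.smul_apply,
        Matrix.transpose_apply, smul_eq_mul]
      exact Finset.sum_congr rfl fun l _ => mul_comm _ _
    rw [hdecomp, map_sum]
    simp only [_root_.map_smul, hcol, smul_eq_mul, mul_zero, Finset.sum_const_zero]
  -- the rank-one perturbation
  let v : Fin n → ℝ := fun l => φ (fun m => if l = m then 1 else 0)
  have hφapply : ∀ y : Fin n → ℝ, φ y = ∑ l, y l * v l := by
    intro y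
    rw [LinearMap.pi_apply_eq_sum_univ φ y]
    simp [v, smul_eq_mul]
  have hv : ∃ l, v l ≠ 0 := by
    by_contra hv
    push_neg at hv
    apply hφne
    apply LinearMap.ext
    intro y
    rw [hφapply y]
    simp [hv]
  let c : Fin n → ℝ := fun i => if i = j then 1 else 0
  let M : Matrix (Fin n) (Fin n) ℝ := Matrix.of fun i l => c i * v l
  have hM : ∀ y : Fin n → ℝ, M *ᵥ y = φ y • c := by
    intro y
    funext i
    simp only [Matrix.mulVec, dotProduct, Matrix.of_apply, Pi.smul_apply,
      smul_eq_mul, hφapply y, Finset.sum_mul, M]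
    exact Finset.sum_congr rfl fun l _ => by ring
  have hpow : ∀ m : ℕ, (A + M) ^ m *ᵥ x₀ = A ^ m *ᵥ x₀ ∧ φ (A ^ m *ᵥ x₀) = 0 := by
    intro m
    induction m with
    | zero => simpa using hx₀
    | succ m ih =>
      obtain ⟨ih1, ih2⟩ := ih
      constructor
      · rw [pow_succ' (A + M) m, pow_succ' A m, ← Matrix.mulVec_mulVec, ← Matrix.mulVec_mulVec,
          ih1, Matrix.add_mulVec, hM, ih2, zero_smul, add_zero]
      · rw [pow_succ' A m, ← Matrix.mulVec_mulVec]
        exact hAy _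
  refine ⟨A + M, ?_, ?_⟩
  · intro hcontra
    rw [add_eq_left] at hcontra
    obtain ⟨l₀, hl₀⟩ := hv
    apply hl₀
    have := congrFun (congrFun hcontra j) l₀
    simpa [M, c] using this
  · intro t
    apply exp_mulVec_congr
    intro m
    rw [smul_pow, smul_pow, Matrix.smul_mulVec, Matrix.smul_mulVec, (hpow m).1]

lemma cols_iIndepFun {Ω : Type*} [MeasurableSpace Ω] {P : Measure Ω} {n : ℕ}
    (B X : Fin n × Fin n → Ω → ℝ) (hBmeas : ∀ s, Measurable (B s))
    (hInd : ProbabilityTheory.iIndepFun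
      (Sum.elim B X) P) :
    iIndepFun
      (fun j ω i => B (i, j) ω) P := by
  classical
  have hPprob : IsProbabilityMeasure P := hInd.isProbabilityMeasure
  set Y : Fin n → Ω → (Fin n → ℝ) := fun j ω i => B (i, j) ω with hY
  -- the π-system of finite "rectangles" per column
  set π : Fin n → Set (Set Ω) := fun j =>
    {t | ∃ E : Fin n → Set ℝ, (∀ i, MeasurableSet (E i)) ∧ t = ⋂ i, B (i, j) ⁻¹' E i} with hπdef
  -- helper : compute the measure of a rectangle intersection via the joint independence
  have key : ∀ (T : Finset (Fin n)) (E : Fin n → Fin n → Set ℝ),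
      (∀ j ∈ T, ∀ i, MeasurableSet (E j i)) →
      P (⋂ j ∈ T, ⋂ i, B (i, j) ⁻¹' E j i)
        = ∏ j ∈ T, ∏ i, P (B (i, j) ⁻¹' E j i) := by
    intro T E hE
    set s : (Fin n × Fin n) ⊕ (Fin n × Fin n) → Set Ω :=
      Sum.elim (fun q => B q ⁻¹' E q.2 q.1) (fun _ => Set.univ) with hs
    set S : Finset ((Fin n × Fin n) ⊕ (Fin n × Fin n)) :=
      (T ×ˢ (Finset.univ : Finset (Fin n))).image
        (fun q : Fin n × Fin n => Sum.inl (q.2, q.1)) with hS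
    have hinj : ∀ a ∈ T ×ˢ (Finset.univ : Finset (Fin n)), ∀ b ∈ T ×ˢ Finset.univ,
        (Sum.inl (a.2, a.1) : (Fin n × Fin n) ⊕ (Fin n × Fin n)) = Sum.inl (b.2, b.1) → a = b := by
      intro a _ b _ hab
      simp only [Sum.inl.injEq, Prod.mk.injEq] at hab
      exact Prod.ext hab.2 hab.1
    have hset : (⋂ j ∈ T, ⋂ i, B (i, j) ⁻¹' E j i) = ⋂ t ∈ S, s t := by
      ext ω
      simp only [Set.mem_iInter, Set.mem_preimage, hS, Finset.mem_image, Finset.mem_product]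
      constructor
      · rintro h t ⟨q, ⟨hq1, _⟩, rfl⟩
        exact h q.1 hq1 q.2
      · intro h j hj i
        exact h (Sum.inl (i, j)) ⟨(j, i), ⟨hj, Finset.mem_univ _⟩, rfl⟩
    have hmeas : ∀ t ∈ S, MeasurableSet[(inferInstance : MeasurableSpace ℝ).comap
        (Sum.elim B X t)] (s t) := by
      intro t ht
      simp only [hS, Finset.mem_image, Finset.mem_product] at ht
      obtain ⟨q, ⟨hq1, _⟩, rfl⟩ := ht
      exact ⟨E q.1 q.2, hE q.1 hq1 q.2, rfl⟩
    rw [hset, hInd.meas_biInter hmeas, hS, Finset.prod_image hinj, Finset.prod_product]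
    simp [hs]
  -- column-wise version
  have key1 : ∀ (j : Fin n) (E : Fin n → Set ℝ), (∀ i, MeasurableSet (E i)) →
      P (⋂ i, B (i, j) ⁻¹' E i) = ∏ i, P (B (i, j) ⁻¹' E i) := by
    intro j E hE
    have := key {j} (fun _ => E) (fun _ _ => hE)
    simpa using this
  rw [iIndepFun_iff_iIndep]
  refine iIndepSets.iIndep (fun j => Measurable.comap_le
      (measurable_pi_lambda _ fun i => hBmeas (i, j))) π
    (fun j => ?_) (fun j => ?_) ?_
  · -- π-system
    rintro t1 ⟨E1, hE1, rfl⟩ t2 ⟨E2, hE2, rfl⟩ _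
    refine ⟨fun i => E1 i ∩ E2 i, fun i => (hE1 i).inter (hE2 i), ?_⟩
    ext ω
    simp only [Set.mem_inter_iff, Set.mem_iInter, Set.mem_preimage]
    exact ⟨fun h i => ⟨h.1 i, h.2 i⟩, fun h => ⟨fun i => (h i).1, fun i => (h i).2⟩⟩
  · -- generateFrom
    rw [← generateFrom_pi, MeasurableSpace.comap_generateFrom]
    congr 1
    ext t
    constructor
    · rintro ⟨u, ⟨E, hE, rfl⟩, rfl⟩
      refine ⟨E, fun i => hE i (Set.mem_univ i), ?_⟩
      ext ω
      simp [Set.mem_pi, Y]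
    · rintro ⟨E, hE, rfl⟩
      refine ⟨Set.pi Set.univ E, ⟨E, fun i _ => hE i, rfl⟩, ?_⟩
      ext ω
      simp [Set.mem_pi, Y]
  · -- independence of the π-systems
    rw [iIndepSets_iff]
    intro T f hf
    set E : Fin n → Fin n → Set ℝ := fun j =>
      if h : j ∈ T then (hf j h).choose else fun _ => Set.univ with hEdef
    have hspec : ∀ j (h : j ∈ T), (∀ i, MeasurableSet (E j i)) ∧ f j = ⋂ i, B (i, j) ⁻¹' E j i := by
      intro j h
      have := (hf j h).choose_spec
      rw [hEdef]
      simp only [dif_pos h]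
      exact this
    have hrw : (⋂ j ∈ T, f j) = ⋂ j ∈ T, ⋂ i, B (i, j) ⁻¹' E j i := by
      refine Set.iInter₂_congr fun j hj => (hspec j hj).2
    rw [hrw, key T E (fun j hj => (hspec j hj).1)]
    refine Finset.prod_congr rfl fun j hj => ?_
    rw [(hspec j hj).2, key1 j _ (hspec j hj).1]

lemma prob_aux {Ω : Type*} [MeasurableSpace Ω] (P : Measure Ω) [IsProbabilityMeasure P]
    (n : ℕ) (hn : 2 ≤ n) (p : ℝ) (hp : p ∈ Set.Icc (0 : ℝ) 1)
    (B X : Fin n × Fin n → Ω → ℝ)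
    (h0 : ∀ s, P {ω | B s ω = 0} = ENNReal.ofReal p)
    (hBmeas : ∀ s, Measurable (B s))
    (hInd : ProbabilityTheory.iIndepFun
      (Sum.elim B X) P)
    (hYInd : iIndepFun
      (fun j ω i => B (i, j) ω) P)
    (GU : Set Ω)
    (hGU : ∀ ω (j k : Fin n), j ≠ k → (∀ i, B (i, j) ω = 0) → (∀ i, B (i, k) ω = 0) → ω ∈ GU) :
    ENNReal.ofReal (1 - (1 - p ^ n) ^ n - n * p ^ n * (1 - p ^ n) ^ (n - 1)) ≤ P GU := by
  classical
  obtain ⟨hp0, hp1⟩ := hp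
  have hpn0 : (0:ℝ) ≤ p ^ n := pow_nonneg hp0 n
  have hpn1 : p ^ n ≤ 1 := pow_le_one₀ hp0 hp1
  have hq0 : (0:ℝ) ≤ 1 - p ^ n := by linarith
  set F : Fin n → Set Ω := fun j => ⋂ i, B (i, j) ⁻¹' {0} with hF
  have hFmeas : ∀ j, MeasurableSet (F j) :=
    fun j => MeasurableSet.iInter fun i => hBmeas (i, j) (measurableSet_singleton 0)
  have hFcomap : ∀ j, MeasurableSet[(inferInstance : MeasurableSpace (Fin n → ℝ)).comap
      (fun ω i => B (i, j) ω)] (F j) := by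
    intro j
    refine ⟨⋂ i, Function.eval i ⁻¹' {0},
      MeasurableSet.iInter fun i => (measurable_pi_apply i) (measurableSet_singleton 0), ?_⟩
    ext ω; simp [hF, Function.eval]
  -- P (F j) = ofReal (p ^ n)
  have hPZ : ∀ s : Fin n × Fin n, P (B s ⁻¹' {0}) = ENNReal.ofReal p := by
    intro s
    rw [← h0 s]
    rfl
  have hPF : ∀ j, P (F j) = ENNReal.ofReal (p ^ n) := by
    intro j
    set s : (Fin n × Fin n) ⊕ (Fin n × Fin n) → Set Ω :=
      Sum.elim (fun q => B q ⁻¹' {0}) (fun _ => Set.univ) with hs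
    set S : Finset ((Fin n × Fin n) ⊕ (Fin n × Fin n)) :=
      (Finset.univ : Finset (Fin n)).image
        (fun i => (Sum.inl (i, j) : (Fin n × Fin n) ⊕ (Fin n × Fin n))) with hS
    have hset : F j = ⋂ t ∈ S, s t := by
      ext ω
      simp only [hF, Set.mem_iInter, Set.mem_preimage, hS, Finset.mem_image, Finset.mem_univ,
        true_and]
      constructor
      · rintro h t ⟨i, rfl⟩
        exact h i
      · intro h i
        exact h (Sum.inl (i, j)) ⟨i, rfl⟩
    have hmeas : ∀ t ∈ S, MeasurableSet[(inferInstance : MeasurableSpace ℝ).comap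
        (Sum.elim B X t)] (s t) := by
      intro t ht
      simp only [hS, Finset.mem_image, Finset.mem_univ, true_and] at ht
      obtain ⟨i, rfl⟩ := ht
      exact ⟨{0}, measurableSet_singleton 0, rfl⟩
    have hinj : ∀ a ∈ (Finset.univ : Finset (Fin n)), ∀ b ∈ Finset.univ,
        (Sum.inl (a, j) : (Fin n × Fin n) ⊕ (Fin n × Fin n)) = Sum.inl (b, j) → a = b := by
      intro a _ b _ hab
      simpa using hab
    rw [hset, hInd.meas_biInter hmeas, hS, Finset.prod_image hinj]
    simp only [hs, Sum.elim_inl, hPZ]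
    rw [Finset.prod_const, Finset.card_univ, Fintype.card_fin, ← ENNReal.ofReal_pow hp0]
  -- probabilities of complements
  have hPFc : ∀ j, P ((F j)ᶜ) = ENNReal.ofReal ((1 : ℝ) - p ^ n) := by
    intro j
    rw [prob_compl_eq_one_sub (hFmeas j), hPF j, ENNReal.ofReal_sub _ hpn0, ENNReal.ofReal_one]
  -- product rule for per-column events
  have hprod : ∀ G : Fin n → Set Ω, (∀ j, G j = F j ∨ G j = (F j)ᶜ) →
      P (⋂ j, G j) = ∏ j, P (G j) := by
    intro G hG
    refine hYInd.meas_iInter fun j => ?_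
    rcases hG j with h | h
    · rw [h]; exact hFcomap j
    · rw [h]; exact (hFcomap j).compl
  -- bad events
  set N : Set Ω := ⋂ j, (F j)ᶜ with hN
  set U : Fin n → Set Ω := fun j => ⋂ k, (if k = j then F k else (F k)ᶜ) with hU
  have hPN : P N = ENNReal.ofReal (((1 : ℝ) - p ^ n) ^ n) := by
    rw [hN, hprod _ (fun j => Or.inr rfl)]
    simp only [hPFc]
    rw [Finset.prod_const, Finset.card_univ, Fintype.card_fin, ← ENNReal.ofReal_pow hq0]
  have hPU : ∀ j, P (U j) = ENNReal.ofReal (p ^ n * ((1 : ℝ) - p ^ n) ^ (n - 1)) := by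
    intro j
    have := hprod (fun k => if k = j then F k else (F k)ᶜ) (fun k => by
      by_cases h : k = j
      · exact Or.inl (if_pos h)
      · exact Or.inr (if_neg h))
    rw [hU, this, ← Finset.mul_prod_erase Finset.univ _ (Finset.mem_univ j)]
    beta_reduce
    rw [if_pos rfl, hPF j]
    have : ∀ k ∈ Finset.univ.erase j, P (if k = j then F k else (F k)ᶜ)
        = ENNReal.ofReal ((1:ℝ) - p ^ n) := by
      intro k hk
      rw [if_neg (Finset.mem_erase.1 hk).1, hPFc]
    rw [Finset.prod_congr rfl this, Finset.prod_const, Finset.card_erase_of_mem (Finset.mem_univ j),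
      Finset.card_univ, Fintype.card_fin, ← ENNReal.ofReal_pow hq0, ← ENNReal.ofReal_mul hpn0]
  set Bad : Set Ω := N ∪ ⋃ j, U j with hBad
  have hUmeas : ∀ j, MeasurableSet (U j) := by
    intro j
    refine MeasurableSet.iInter fun k => ?_
    by_cases h : k = j
    · rw [if_pos h]; exact hFmeas k
    · rw [if_neg h]; exact (hFmeas k).compl
  have hBadMeas : MeasurableSet Bad :=
    (MeasurableSet.iInter fun j => (hFmeas j).compl).union (MeasurableSet.iUnion hUmeas)
  -- Badᶜ ⊆ GU
  have hsubset : Badᶜ ⊆ GU := by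
    intro ω hω
    rw [hBad, Set.compl_union, Set.mem_inter_iff] at hω
    obtain ⟨hωN, hωU⟩ := hω
    rw [hN, Set.compl_iInter, Set.mem_iUnion] at hωN
    obtain ⟨j, hj⟩ := hωN
    rw [compl_compl] at hj
    rw [Set.compl_iUnion, Set.mem_iInter] at hωU
    have hωUj := hωU j
    rw [hU, Set.mem_compl_iff, Set.mem_iInter] at hωUj
    push_neg at hωUj
    obtain ⟨k, hk⟩ := hωUj
    have hkj : k ≠ j := by
      intro h
      rw [if_pos h, h] at hk
      exact hk hj
    rw [if_neg hkj, Set.notMem_compl_iff] at hk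
    refine hGU ω k j hkj ?_ ?_
    · intro i
      have := Set.mem_iInter.1 hk i
      simpa using this
    · intro i
      have := Set.mem_iInter.1 hj i
      simpa using this
  -- bound P Bad
  have hxnn : (0:ℝ) ≤ ((1:ℝ) - p ^ n) ^ n + n * (p ^ n * ((1:ℝ) - p ^ n) ^ (n - 1)) := by
    have : (0:ℝ) ≤ p ^ n * ((1:ℝ) - p ^ n) ^ (n - 1) :=
      mul_nonneg hpn0 (pow_nonneg hq0 _)
    positivity
  have hPBad : P Bad ≤ ENNReal.ofReal (((1:ℝ) - p ^ n) ^ n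
      + n * (p ^ n * ((1:ℝ) - p ^ n) ^ (n - 1))) := by
    calc P Bad ≤ P N + P (⋃ j, U j) := measure_union_le _ _
    _ ≤ P N + ∑ j, P (U j) := add_le_add_right (measure_iUnion_fintype_le P U) _
    _ = ENNReal.ofReal (((1:ℝ) - p ^ n) ^ n)
        + n * ENNReal.ofReal (p ^ n * ((1:ℝ) - p ^ n) ^ (n - 1)) := by
        rw [hPN]
        congr 1
        simp only [hPU]
        rw [Finset.sum_const, Finset.card_univ, Fintype.card_fin, nsmul_eq_mul]
    _ = _ := by
        rw [← ENNReal.ofReal_natCast n, ← ENNReal.ofReal_mul (Nat.cast_nonneg n),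
          ← ENNReal.ofReal_add (pow_nonneg hq0 n) (by positivity)]
  -- conclude
  have hstep : ENNReal.ofReal (1 - (1 - p ^ n) ^ n - n * p ^ n * (1 - p ^ n) ^ (n - 1))
      = 1 - ENNReal.ofReal (((1:ℝ) - p ^ n) ^ n + n * (p ^ n * ((1:ℝ) - p ^ n) ^ (n - 1))) := by
    rw [sub_sub, ← ENNReal.ofReal_one, ← ENNReal.ofReal_sub _ hxnn]
    congr 1
    ring
  rw [hstep]
  calc 1 - ENNReal.ofReal (((1:ℝ) - p ^ n) ^ n + n * (p ^ n * ((1:ℝ) - p ^ n) ^ (n - 1)))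
      ≤ 1 - P Bad := tsub_le_tsub_left hPBad 1
    _ = P Badᶜ := (prob_compl_eq_one_sub hBadMeas).symm
    _ ≤ P GU := measure_mono hsubset


/-- A sparse-continuous random matrix with sparsity level `p` is globally unidentifiable
with probability at least `1 - (1 - pⁿ)ⁿ - n pⁿ (1 - pⁿ)^(n-1)` (for `n ≥ 2`). -/
theorem sparseContinuous_globally_unidentifiable_prob_lower_bound
    {Ω : Type*} [MeasurableSpace Ω] (P : Measure Ω) [IsProbabilityMeasure P]
    (n : ℕ) (hn : 2 ≤ n) (p : ℝ) (hp : p ∈ Set.Icc (0 : ℝ) 1)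
    (A : Ω → Matrix (Fin n) (Fin n) ℝ) (hA : IsSparseContinuous P A p) :
    ENNReal.ofReal (1 - (1 - p ^ n) ^ n - n * p ^ n * (1 - p ^ n) ^ (n - 1))
      ≤ P {ω | GloballyUnidentifiable (A ω)} := by
  obtain ⟨B, X, hABX, h01, h1, h0, hBmeas, hXmeas, hXac, hInd⟩ := hA
  refine prob_aux P n hn p hp B X h0 hBmeas hInd (cols_iIndepFun B X hBmeas hInd) _ ?_
  intro ω j k hjk hj hk
  exact gu_of_two_zero_cols (A ω) hjk
    (fun i => by rw [hABX ω i j, hj i, zero_mul])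
    (fun i => by rw [hABX ω i k, hk i, zero_mul])
end

section
/- Let n ≥ 1 and A ∈ ℝ^{n×n} with rank(A) ≤ n - 2. Then A is globally unidentifiable: for every x₀ ∈ ℝⁿ there exists a matrix B ∈ ℝ^{n×n} with B ≠ A such that exp(tB) x₀ = exp(tA) x₀ for all t ∈ ℝ. -/
open MeasureTheory
open scoped Matrix

/-- If two matrices have all powers acting equally on `x₀`, their exponentials act equally. -/
private lemma exp_mulVec_eq_of_pow {n : ℕ} (M N : Matrix (Fin n) (Fin n) ℝ)
    (x₀ : Fin n → ℝ) (h : ∀ k : ℕ, (M ^ k).mulVec x₀ = (N ^ k).mulVec x₀) :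
    (NormedSpace.exp M).mulVec x₀ = (NormedSpace.exp N).mulVec x₀ := by
  letI : SeminormedRing (Matrix (Fin n) (Fin n) ℝ) := Matrix.linftyOpSemiNormedRing
  letI : NormedRing (Matrix (Fin n) (Fin n) ℝ) := Matrix.linftyOpNormedRing
  letI : NormedAlgebra ℝ (Matrix (Fin n) (Fin n) ℝ) := Matrix.linftyOpNormedAlgebra
  let L₀ : Matrix (Fin n) (Fin n) ℝ →ₗ[ℝ] (Fin n → ℝ) :=
    { toFun := fun P => P.mulVec x₀
      map_add' := fun P Q => Matrix.add_mulVec P Q x₀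
      map_smul' := fun c P => by simp [Matrix.smul_mulVec] }
  let L : Matrix (Fin n) (Fin n) ℝ →L[ℝ] (Fin n → ℝ) :=
    { L₀ with cont := L₀.continuous_of_finiteDimensional }
  have hL : ∀ P : Matrix (Fin n) (Fin n) ℝ, L P = P.mulVec x₀ := fun _ => rfl
  have hsM := NormedSpace.expSeries_summable' (𝕂 := ℝ) M
  have hsN := NormedSpace.expSeries_summable' (𝕂 := ℝ) N
  calc (NormedSpace.exp M).mulVec x₀ = L (∑' (k : ℕ), (((Nat.factorial k : ℝ))⁻¹) • M ^ k) := by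
        rw [hL, NormedSpace.exp_eq_tsum (𝕂 := ℝ)]
    _ = ∑' (k : ℕ), L ((((Nat.factorial k : ℝ))⁻¹) • M ^ k) := L.map_tsum hsM
    _ = ∑' (k : ℕ), L ((((Nat.factorial k : ℝ))⁻¹) • N ^ k) := by
        refine tsum_congr fun k => ?_
        rw [_root_.map_smul, _root_.map_smul, hL, hL, h k]
    _ = L (∑' (k : ℕ), (((Nat.factorial k : ℝ))⁻¹) • N ^ k) := (L.map_tsum hsN).symm
    _ = (NormedSpace.exp N).mulVec x₀ := by rw [hL, NormedSpace.exp_eq_tsum (𝕂 := ℝ)]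

/-- If `rank A ≤ n - 2`, then `A` is globally unidentifiable: from every initial condition
`x₀` there is a different matrix `B ≠ A` producing the same solution trajectory. -/
theorem globally_unidentifiable_of_rank_le (n : ℕ) (hn : 1 ≤ n)
    (A : Matrix (Fin n) (Fin n) ℝ) (hA : A.rank + 2 ≤ n) :
    ∀ x₀ : Fin n → ℝ, ∃ B : Matrix (Fin n) (Fin n) ℝ, B ≠ A ∧
      ∀ t : ℝ, (NormedSpace.exp (t • B)).mulVec x₀ = (NormedSpace.exp (t • A)).mulVec x₀ := by
  intro x₀
  -- the linear functional `v ↦ v ⬝ᵥ x₀`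
  let f : (Fin n → ℝ) →ₗ[ℝ] ℝ :=
    { toFun := fun v => v ⬝ᵥ x₀
      map_add' := fun u w => add_dotProduct u w x₀
      map_smul' := fun c u => smul_dotProduct c u x₀ }
  let g := Matrix.mulVecLin Aᵀ
  have hdim : Module.finrank ℝ (Fin n → ℝ) = n := by simp
  have hg : A.rank + Module.finrank ℝ (LinearMap.ker g) = n := by
    have := LinearMap.finrank_range_add_finrank_ker g
    rw [hdim] at this
    have hrk : Module.finrank ℝ (LinearMap.range g) = A.rank := by
      rw [show Module.finrank ℝ (LinearMap.range g) = Aᵀ.rank from rfl,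
        Matrix.rank_transpose]
    omega
  have hf : n ≤ Module.finrank ℝ (LinearMap.ker f) + 1 := by
    have h1 := LinearMap.finrank_range_add_finrank_ker f
    rw [hdim] at h1
    have h2 : Module.finrank ℝ (LinearMap.range f) ≤ 1 := by
      simpa using (LinearMap.range f).finrank_le
    omega
  -- the intersection of the two kernels is nontrivial
  have hinf : 0 < Module.finrank ℝ ((LinearMap.ker g ⊓ LinearMap.ker f : Submodule ℝ (Fin n → ℝ))) := by
    have hsup := Submodule.finrank_sup_add_finrank_inf_eq (LinearMap.ker g) (LinearMap.ker f)
    have hle : Module.finrank ℝ ((LinearMap.ker g ⊔ LinearMap.ker f : Submodule ℝ (Fin n → ℝ))) ≤ n := by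
      simpa [hdim] using (LinearMap.ker g ⊔ LinearMap.ker f).finrank_le
    omega
  have hbot : (LinearMap.ker g ⊓ LinearMap.ker f : Submodule ℝ (Fin n → ℝ)) ≠ ⊥ := by
    intro hb
    rw [hb, finrank_bot] at hinf
    exact lt_irrefl 0 hinf
  obtain ⟨v, hv, hv0⟩ := Submodule.exists_mem_ne_zero_of_ne_bot hbot
  have hvker : Aᵀ.mulVec v = 0 := hv.1
  have hvx : v ⬝ᵥ x₀ = 0 := hv.2
  -- the perturbed matrix
  refine ⟨A + Matrix.vecMulVec v v, ?_, ?_⟩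
  · intro hBA
    have h0 : Matrix.vecMulVec v v = 0 := by
      have := add_eq_left.mp hBA
      exact this
    obtain ⟨i, hi⟩ := Function.ne_iff.mp hv0
    have := congrFun (congrFun h0 i) i
    rw [Matrix.vecMulVec_apply] at this
    exact hi (mul_self_eq_zero.mp this)
  · -- trajectories coincide
    have hBmul : ∀ y : Fin n → ℝ,
        (A + Matrix.vecMulVec v v).mulVec y = A.mulVec y + (v ⬝ᵥ y) • v := by
      intro y
      rw [Matrix.add_mulVec]
      congr 1
      ext i
      simp [Matrix.mulVec, Matrix.vecMulVec_apply, dotProduct, Finset.mul_sum,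
        mul_assoc, mul_comm, mul_left_comm]
    have hdot : ∀ k : ℕ, v ⬝ᵥ (A ^ k).mulVec x₀ = 0 := by
      intro k
      cases k with
      | zero => simpa using hvx
      | succ m =>
        rw [pow_succ', ← Matrix.mulVec_mulVec, Matrix.dotProduct_mulVec,
          ← Matrix.mulVec_transpose, hvker, zero_dotProduct]
    have hpow : ∀ k : ℕ, ((A + Matrix.vecMulVec v v) ^ k).mulVec x₀ = (A ^ k).mulVec x₀ := by
      intro k
      induction k with
      | zero => rfl
      | succ m ih =>
        rw [pow_succ', ← Matrix.mulVec_mulVec, ih, hBmul, hdot m, zero_smul, add_zero,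
          Matrix.mulVec_mulVec, ← pow_succ']
    intro t
    refine exp_mulVec_eq_of_pow _ _ x₀ fun k => ?_
    rw [smul_pow, smul_pow, Matrix.smul_mulVec, Matrix.smul_mulVec, hpow]
end

section
/- Let A, A' ∈ ℝ^{n×n} and let V ⊆ ℝⁿ be a linear subspace such that A V ⊆ V and (A - A') v = 0 for every v ∈ V. Then for every t ≥ 0 and every x₀ ∈ ℝⁿ, ‖exp(tA) x₀ - exp(tA') x₀‖₂ ≤ (∫₀ᵗ ‖exp((t-s)A)‖ · ‖exp(sA')‖ ds) · ‖A - A'‖ · dist(x₀, V), where dist(x₀, V) = min_{y ∈ V} ‖x₀ - y‖₂ and ‖·‖ denotes the ℓ²→ℓ² operator norm on ℝ^{n×n}. -/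
open MeasureTheory
open scoped Matrix.Norms.L2Operator

set_option maxHeartbeats 1000000
set_option synthInstance.maxHeartbeats 400000

/-- If `V` is an `A`-invariant subspace on which `A` and `A'` agree, then for `t ≥ 0`,
`‖exp (t A) x₀ - exp (t A') x₀‖₂ ≤ (∫₀ᵗ ‖exp ((t-s) A)‖ ‖exp (s A')‖ ds) ‖A - A'‖ dist(x₀, V)`. -/
theorem exp_mulVec_dist_le_of_invariant_agree (n : ℕ) (A A' : Matrix (Fin n) (Fin n) ℝ)
    (V : Submodule ℝ (EuclideanSpace ℝ (Fin n)))
    (hinv : ∀ v ∈ V, Matrix.toEuclideanLin A v ∈ V)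
    (hagree : ∀ v ∈ V, Matrix.toEuclideanLin (A - A') v = 0)
    (t : ℝ) (ht : 0 ≤ t) (x₀ : EuclideanSpace ℝ (Fin n)) :
    ‖Matrix.toEuclideanLin (NormedSpace.exp (t • A)) x₀
        - Matrix.toEuclideanLin (NormedSpace.exp (t • A')) x₀‖
      ≤ (∫ s in (0 : ℝ)..t,
            ‖NormedSpace.exp ((t - s) • A)‖ * ‖NormedSpace.exp (s • A')‖)
          * ‖A - A'‖ * Metric.infDist x₀ (V : Set (EuclideanSpace ℝ (Fin n))) := by
  classical
  letI : NormedAlgebra ℚ (Matrix (Fin n) (Fin n) ℝ) := .restrictScalars ℚ ℝ _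
  letI : NormedAlgebra ℚ (EuclideanSpace ℝ (Fin n) →L[ℝ] EuclideanSpace ℝ (Fin n)) :=
    .restrictScalars ℚ ℝ _
  haveI hIST : IsScalarTower ℝ
      (EuclideanSpace ℝ (Fin n) →L[ℝ] EuclideanSpace ℝ (Fin n))
      (EuclideanSpace ℝ (Fin n) →L[ℝ] EuclideanSpace ℝ (Fin n)) := by
    constructor
    intro c f g
    ext v
    simp [smul_smul, ContinuousLinearMap.smul_apply, ContinuousLinearMap.smul_def, _root_.map_smul]
  haveI hSCC : SMulCommClass ℝ
      (EuclideanSpace ℝ (Fin n) →L[ℝ] EuclideanSpace ℝ (Fin n))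
      (EuclideanSpace ℝ (Fin n) →L[ℝ] EuclideanSpace ℝ (Fin n)) := by
    constructor
    intro c f g
    ext v
    simp [ContinuousLinearMap.smul_apply, ContinuousLinearMap.smul_def,
      ContinuousLinearMap.mul_apply, _root_.map_smul]
  set φ := Matrix.toEuclideanCLM (𝕜 := ℝ) (n := Fin n) with hφdef
  have hφ : ∀ (M : Matrix (Fin n) (Fin n) ℝ) (x : EuclideanSpace ℝ (Fin n)),
      φ M x = Matrix.toEuclideanLin M x := fun _ _ => rfl
  have hψ : Continuous φ := LinearMap.continuous_of_finiteDimensional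
      ({ toFun := φ, map_add' := map_add φ, map_smul' := _root_.map_smul φ } :
        Matrix (Fin n) (Fin n) ℝ →ₗ[ℝ] _)
  set B := φ A with hB
  set B' := φ A' with hB'
  have hmapexp : ∀ (M : Matrix (Fin n) (Fin n) ℝ) (u : ℝ),
      φ (NormedSpace.exp (u • M)) = NormedSpace.exp (u • φ M) := by
    intro M u; rw [NormedSpace.map_exp _ hψ, _root_.map_smul]
  have hnorm : ∀ M : Matrix (Fin n) (Fin n) ℝ, ‖M‖ = ‖φ M‖ := fun M => rfl
  have hinv' : ∀ v ∈ V, B v ∈ V := hinv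
  have hagB : ∀ v ∈ V, B v = B' v := by
    intro v hv
    have h2 : (B - B') v = 0 := by
      have : B - B' = φ (A - A') := (map_sub φ A A').symm
      rw [this, hφ]; exact hagree v hv
    have := ContinuousLinearMap.sub_apply B B' v
    rw [h2] at this
    exact (sub_eq_zero.mp this.symm)
  -- powers agree on V
  have hinvT : ∀ v ∈ V, (t • B) v ∈ V := fun v hv => by
    rw [ContinuousLinearMap.smul_apply]; exact V.smul_mem t (hinv' v hv)
  have hagT : ∀ v ∈ V, (t • B) v = (t • B') v := fun v hv => by
    rw [ContinuousLinearMap.smul_apply, ContinuousLinearMap.smul_apply, hagB v hv]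
  have hpow : ∀ (k : ℕ), ∀ v ∈ V, ((t • B) ^ k) v ∈ V ∧ ((t • B) ^ k) v = ((t • B') ^ k) v := by
    intro k
    induction k with
    | zero => intro v hv; exact ⟨by simpa using hv, by simp⟩
    | succ k ih =>
      intro v hv
      obtain ⟨hmem, heq⟩ := ih v hv
      have h1 : ((t • B) ^ (k + 1)) v = (t • B) (((t • B) ^ k) v) := by
        rw [pow_succ']; rfl
      have h1' : ((t • B') ^ (k + 1)) v = (t • B') (((t • B') ^ k) v) := by
        rw [pow_succ']; rfl
      refine ⟨by rw [h1]; exact hinvT _ hmem, ?_⟩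
      rw [h1, h1', ← heq, hagT _ hmem]
  -- exp agrees on V
  have hexpagree : ∀ v ∈ V,
      NormedSpace.exp (t • B) v = NormedSpace.exp (t • B') v := by
    intro v hv
    have hs : ∀ C : EuclideanSpace ℝ (Fin n) →L[ℝ] EuclideanSpace ℝ (Fin n),
        NormedSpace.exp C v
          = ∑' k : ℕ, ((k.factorial : ℝ)⁻¹) • ((C ^ k) v) := by
      intro C
      rw [NormedSpace.exp_eq_tsum (𝕂 := ℝ)]
      have h0 := (ContinuousLinearMap.apply ℝ (EuclideanSpace ℝ (Fin n)) v).map_tsum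
        (NormedSpace.expSeries_summable' (𝕂 := ℝ) C)
      have h1 : ((∑' k : ℕ, ((k.factorial : ℝ))⁻¹ • C ^ k)) v
          = ∑' k : ℕ, (((k.factorial : ℝ))⁻¹ • C ^ k) v := h0
      rw [h1]
      exact tsum_congr fun k => ContinuousLinearMap.smul_apply _ _ _
    rw [hs (t • B), hs (t • B')]
    exact tsum_congr fun k => by rw [(hpow k v hv).2]
  -- choose nearest point
  obtain ⟨y, hyV, hy⟩ := (Submodule.closed_of_finiteDimensional
    (V : Submodule ℝ (EuclideanSpace ℝ (Fin n)))).exists_infDist_eq_dist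
    ⟨0, V.zero_mem⟩ x₀
  set x : EuclideanSpace ℝ (Fin n) := x₀ - y with hx
  set e1 : ℝ → (EuclideanSpace ℝ (Fin n) →L[ℝ] EuclideanSpace ℝ (Fin n)) :=
    fun s => NormedSpace.exp ((t - s) • B) with he1
  set e2 : ℝ → (EuclideanSpace ℝ (Fin n) →L[ℝ] EuclideanSpace ℝ (Fin n)) :=
    fun s => NormedSpace.exp (s • B') with he2
  have hce1 : Continuous e1 :=
    NormedSpace.exp_continuous.comp ((continuous_const.sub continuous_id).smul continuous_const)
  have hce2 : Continuous e2 :=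
    NormedSpace.exp_continuous.comp (continuous_id.smul continuous_const)
  set D : ℝ → (EuclideanSpace ℝ (Fin n) →L[ℝ] EuclideanSpace ℝ (Fin n)) :=
    fun s => e1 s * ((B' - B) * e2 s) with hDdef
  have hDcont : Continuous D := hce1.mul (continuous_const.mul hce2)
  have hDxcont : Continuous fun s => (D s) x :=
    (ContinuousLinearMap.apply ℝ (EuclideanSpace ℝ (Fin n)) x).continuous.comp hDcont
  have hgderiv : ∀ s : ℝ, HasDerivAt (fun u => (e1 u * e2 u) x) ((D s) x) s := by
    intro s
    have h1 : HasDerivAt e1 (-(B * e1 s)) s := by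
      have h := hasDerivAt_exp_smul_const' (𝕂 := ℝ) B (t - s)
      have hu : HasDerivAt (fun u : ℝ => t - u) (-1) s := (hasDerivAt_id s).const_sub t
      have := h.scomp s hu
      simp only [neg_smul, one_smul] at this
      exact this
    have h2 : HasDerivAt e2 (e2 s * B') s := hasDerivAt_exp_smul_const (𝕂 := ℝ) B' s
    have hF := h1.mul h2
    have hcomm1 : B * e1 s = e1 s * B :=
      (((Commute.refl B).smul_right (t - s)).exp_right).eq
    have hcomm2 : e2 s * B' = B' * e2 s :=
      ((((Commute.refl B').smul_left s)).exp_left).eq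
    have heq : -(B * e1 s) * e2 s + e1 s * (e2 s * B') = D s := by
      show _ = e1 s * ((B' - B) * e2 s)
      have h5 : (B' - B) * e2 s = B' * e2 s - B * e2 s := sub_mul _ _ _
      have h3 : -(e1 s * B) * e2 s = -(e1 s * (B * e2 s)) := by
        rw [neg_mul (e1 s * B) (e2 s), mul_assoc]
      rw [hcomm1, hcomm2, h5, mul_sub, h3, neg_add_eq_sub]
    rw [heq] at hF
    have := hF.clm_apply (hasDerivAt_const s x)
    simpa using this
  have hint : IntervalIntegrable (fun s => (D s) x) volume 0 t :=
    hDxcont.intervalIntegrable 0 t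
  have key : (∫ s in (0 : ℝ)..t, (D s) x)
      = NormedSpace.exp (t • B') x - NormedSpace.exp (t • B) x := by
    rw [intervalIntegral.integral_eq_sub_of_hasDerivAt (fun s _ => hgderiv s) hint]
    have h1t : e1 t = 1 := by
      show NormedSpace.exp ((t - t) • B) = 1
      have hzB : (t - t) • B = 0 := by rw [sub_self]; exact zero_smul ℝ B
      rw [hzB, NormedSpace.exp_zero]
    have h1z : e1 0 = NormedSpace.exp (t • B) := by
      show NormedSpace.exp ((t - 0) • B) = _
      rw [sub_zero]
    have h2z : e2 0 = 1 := by
      show NormedSpace.exp ((0 : ℝ) • B') = 1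
      have hzB' : (0 : ℝ) • B' = 0 := zero_smul ℝ B'
      rw [hzB', NormedSpace.exp_zero]
    rw [h1t, h1z, h2z, one_mul, mul_one]
  have hbound : ∀ s, ‖(D s) x‖ ≤ (‖e1 s‖ * ‖e2 s‖) * (‖B - B'‖ * ‖x‖) := by
    intro s
    calc ‖(D s) x‖ ≤ ‖D s‖ * ‖x‖ := (D s).le_opNorm x
      _ ≤ (‖e1 s‖ * (‖B' - B‖ * ‖e2 s‖)) * ‖x‖ := by
          have h4 : ‖D s‖ ≤ ‖e1 s‖ * (‖B' - B‖ * ‖e2 s‖) :=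
            (norm_mul_le (e1 s) ((B' - B) * e2 s)).trans
              (mul_le_mul_of_nonneg_left (norm_mul_le _ _) (norm_nonneg _))
          exact mul_le_mul_of_nonneg_right h4 (norm_nonneg x)
      _ = (‖e1 s‖ * ‖e2 s‖) * (‖B - B'‖ * ‖x‖) := by rw [norm_sub_rev]; ring
  have hint2 : IntervalIntegrable
      (fun s => (‖e1 s‖ * ‖e2 s‖) * (‖B - B'‖ * ‖x‖)) volume 0 t :=
    ((hce1.norm.mul hce2.norm).mul continuous_const).intervalIntegrable 0 t
  have hmain : ‖NormedSpace.exp (t • B) x - NormedSpace.exp (t • B') x‖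
      ≤ (∫ s in (0 : ℝ)..t, ‖e1 s‖ * ‖e2 s‖) * (‖B - B'‖ * ‖x‖) := by
    rw [norm_sub_rev, ← key]
    calc ‖∫ s in (0 : ℝ)..t, (D s) x‖
        ≤ ∫ s in (0 : ℝ)..t, ‖(D s) x‖ :=
          intervalIntegral.norm_integral_le_integral_norm ht
      _ ≤ ∫ s in (0 : ℝ)..t, (‖e1 s‖ * ‖e2 s‖) * (‖B - B'‖ * ‖x‖) :=
          intervalIntegral.integral_mono_on ht (hint.norm) hint2 (fun s _ => hbound s)
      _ = (∫ s in (0 : ℝ)..t, ‖e1 s‖ * ‖e2 s‖) * (‖B - B'‖ * ‖x‖) :=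
          intervalIntegral.integral_mul_const _ _
  -- assemble
  have hL : Matrix.toEuclideanLin (NormedSpace.exp (t • A)) x₀
        - Matrix.toEuclideanLin (NormedSpace.exp (t • A')) x₀
      = NormedSpace.exp (t • B) x - NormedSpace.exp (t • B') x := by
    rw [← hφ, ← hφ, hmapexp, hmapexp, hx, map_sub, map_sub, hexpagree y hyV]
    abel
  have hRint : (fun s => ‖NormedSpace.exp ((t - s) • A)‖ * ‖NormedSpace.exp (s • A')‖)
      = fun s => ‖e1 s‖ * ‖e2 s‖ := by
    funext s
    rw [hnorm, hnorm, hmapexp, hmapexp, he1, he2]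
  have hRA : ‖A - A'‖ = ‖B - B'‖ := by rw [hnorm, map_sub]
  have hRd : Metric.infDist x₀ (V : Set (EuclideanSpace ℝ (Fin n))) = ‖x‖ := by
    rw [hy, dist_eq_norm, hx]
  rw [hL, hRint, hRA, hRd, mul_assoc]
  exact hmain
end

section
/- Let A, A' ∈ ℝ^{n×n} and let V ⊆ ℝⁿ be a linear subspace such that A V ⊆ V and (A - A') v = 0 for every v ∈ V. Suppose there are constants M ≥ 1 and α ≥ 0 with ‖exp(tA)‖ ≤ M e^{αt} and ‖exp(tA')‖ ≤ M e^{αt} for all t ≥ 0. Then for every x₀ ∈ ℝⁿ and t ≥ 0, ‖exp(tA) x₀ - exp(tA') x₀‖₂ ≤ ‖A - A'‖ · M² · dist(x₀, V) · t · e^{αt}. Consequently, for every ε > 0 and T ≥ 0 satisfying T e^{αT} ≤ ε / (‖A - A'‖ · M² · dist(x₀, V)) (assuming ‖A - A'‖ · dist(x₀, V) > 0), we have ‖exp(tA) x₀ - exp(tA') x₀‖₂ ≤ ε for all 0 ≤ t ≤ T. -/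
open MeasureTheory
open scoped Matrix.Norms.L2Operator Nat

namespace ExpMulVecAux

variable {n : ℕ}

/-- Evaluation of `toEuclideanLin` at a fixed vector, as a continuous linear map in the matrix. -/
noncomputable def phi (x : EuclideanSpace ℝ (Fin n)) :
    Matrix (Fin n) (Fin n) ℝ →L[ℝ] EuclideanSpace ℝ (Fin n) :=
  LinearMap.toContinuousLinearMap
    ((LinearMap.applyₗ x).comp
      (Matrix.toEuclideanLin (𝕜 := ℝ) (m := Fin n) (n := Fin n)).toLinearMap)

lemma phi_apply (x : EuclideanSpace ℝ (Fin n)) (B : Matrix (Fin n) (Fin n) ℝ) :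
    phi x B = Matrix.toEuclideanLin B x := rfl

lemma toEuclideanLin_mul (B C : Matrix (Fin n) (Fin n) ℝ) (x : EuclideanSpace ℝ (Fin n)) :
    Matrix.toEuclideanLin (B * C) x = Matrix.toEuclideanLin B (Matrix.toEuclideanLin C x) := by
  simp [Matrix.toEuclideanLin_apply, Matrix.mulVec_mulVec]

lemma norm_toEuclideanLin_apply_le (B : Matrix (Fin n) (Fin n) ℝ)
    (x : EuclideanSpace ℝ (Fin n)) :
    ‖Matrix.toEuclideanLin B x‖ ≤ ‖B‖ * ‖x‖ :=
  Matrix.l2_opNorm_mulVec B x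

set_option maxHeartbeats 1000000 in
/-- If `V` is invariant under `A`, it is invariant under `exp (s • A)`. -/
lemma exp_mem (A : Matrix (Fin n) (Fin n) ℝ) (V : Submodule ℝ (EuclideanSpace ℝ (Fin n)))
    (hinv : ∀ v ∈ V, Matrix.toEuclideanLin A v ∈ V) (s : ℝ)
    {v : EuclideanSpace ℝ (Fin n)} (hv : v ∈ V) :
    Matrix.toEuclideanLin (NormedSpace.exp (s • A)) v ∈ V := by
  have hpow : ∀ k : ℕ, Matrix.toEuclideanLin ((s • A) ^ k) v ∈ V := by
    intro k
    induction k with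
    | zero => simpa [Matrix.toEuclideanLin_apply, Matrix.one_mulVec] using hv
    | succ k ih =>
        rw [pow_succ']
        rw [toEuclideanLin_mul]
        have := hinv _ ih
        simpa using V.smul_mem s this
  have hsum : HasSum (fun k : ℕ => phi v ((k ! : ℝ)⁻¹ • (s • A) ^ k))
      (phi v (NormedSpace.exp (s • A))) := by
    rw [NormedSpace.exp_eq_tsum ℝ]
    exact ((NormedSpace.expSeries_summable' (𝕂 := ℝ) (s • A)).hasSum).mapL (phi v)
  have hclosed : IsClosed (V : Set (EuclideanSpace ℝ (Fin n))) :=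
    Submodule.closed_of_finiteDimensional V
  have hmem : ∀ F : Finset ℕ, (∑ k ∈ F, phi v ((k ! : ℝ)⁻¹ • (s • A) ^ k)) ∈ V := by
    intro F
    refine V.sum_mem fun k _ => ?_
    have : phi v ((k ! : ℝ)⁻¹ • (s • A) ^ k) = (k ! : ℝ)⁻¹ • Matrix.toEuclideanLin ((s • A) ^ k) v := by
      rw [phi_apply]; simp
    rw [this]
    exact V.smul_mem _ (hpow k)
  have := hclosed.mem_of_tendsto hsum (Filter.Eventually.of_forall hmem)
  simpa [phi_apply] using this

end ExpMulVecAux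

open ExpMulVecAux

/-- If `V` is `A`-invariant, `A` and `A'` agree on `V`, and `‖exp (t A)‖, ‖exp (t A')‖ ≤ M e^{α t}`
for `t ≥ 0`, then `‖exp (t A) x₀ - exp (t A') x₀‖₂ ≤ ‖A - A'‖ M² dist(x₀, V) t e^{α t}`;
consequently, trajectories stay `ε`-close on `[0, T]` whenever
`T e^{α T} ≤ ε / (‖A - A'‖ M² dist(x₀, V))`. -/
theorem exp_mulVec_dist_close_up_to_time (n : ℕ) (A A' : Matrix (Fin n) (Fin n) ℝ)
    (V : Submodule ℝ (EuclideanSpace ℝ (Fin n)))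
    (hinv : ∀ v ∈ V, Matrix.toEuclideanLin A v ∈ V)
    (hagree : ∀ v ∈ V, Matrix.toEuclideanLin (A - A') v = 0)
    (M α : ℝ) (hM : 1 ≤ M) (hα : 0 ≤ α)
    (hA : ∀ t : ℝ, 0 ≤ t → ‖NormedSpace.exp (t • A)‖ ≤ M * Real.exp (α * t))
    (hA' : ∀ t : ℝ, 0 ≤ t → ‖NormedSpace.exp (t • A')‖ ≤ M * Real.exp (α * t))
    (x₀ : EuclideanSpace ℝ (Fin n)) :
    (∀ t : ℝ, 0 ≤ t →
        ‖Matrix.toEuclideanLin (NormedSpace.exp (t • A)) x₀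
            - Matrix.toEuclideanLin (NormedSpace.exp (t • A')) x₀‖
          ≤ ‖A - A'‖ * M ^ 2 * Metric.infDist x₀ (V : Set (EuclideanSpace ℝ (Fin n)))
              * (t * Real.exp (α * t))) ∧
      (∀ ε : ℝ, 0 < ε → ∀ T : ℝ, 0 ≤ T →
        0 < ‖A - A'‖ * Metric.infDist x₀ (V : Set (EuclideanSpace ℝ (Fin n))) →
        T * Real.exp (α * T)
          ≤ ε / (‖A - A'‖ * M ^ 2 * Metric.infDist x₀ (V : Set (EuclideanSpace ℝ (Fin n)))) →
        ∀ t ∈ Set.Icc (0 : ℝ) T,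
          ‖Matrix.toEuclideanLin (NormedSpace.exp (t • A)) x₀
              - Matrix.toEuclideanLin (NormedSpace.exp (t • A')) x₀‖ ≤ ε) := by
  set d : ℝ := Metric.infDist x₀ (V : Set (EuclideanSpace ℝ (Fin n))) with hd
  have hmain : ∀ t : ℝ, 0 ≤ t →
      ‖Matrix.toEuclideanLin (NormedSpace.exp (t • A)) x₀
          - Matrix.toEuclideanLin (NormedSpace.exp (t • A')) x₀‖
        ≤ ‖A - A'‖ * M ^ 2 * d * (t * Real.exp (α * t)) := by
    intro t ht
    -- choose nearest point v ∈ V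
    obtain ⟨v, hvV, hvd⟩ :=
      (Submodule.closed_of_finiteDimensional V).exists_infDist_eq_dist ⟨0, V.zero_mem⟩ x₀
    set w : EuclideanSpace ℝ (Fin n) := x₀ - v with hw
    have hwnorm : ‖w‖ = d := by
      rw [hd, hvd, dist_eq_norm]
    -- the interpolating function
    set F : ℝ → Matrix (Fin n) (Fin n) ℝ :=
      fun s => NormedSpace.exp ((t - s) • A') * NormedSpace.exp (s • A) with hF
    set F' : ℝ → Matrix (Fin n) (Fin n) ℝ :=
      fun s => NormedSpace.exp ((t - s) • A') * ((A - A') * NormedSpace.exp (s • A)) with hF'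
    have hderiv : ∀ s : ℝ, HasDerivAt F (F' s) s := by
      intro s
      have h1 : HasDerivAt (fun s : ℝ => NormedSpace.exp ((t - s) • A'))
          (-(NormedSpace.exp ((t - s) • A') * A')) s := by
        have hout := hasDerivAt_exp_smul_const (𝕂 := ℝ) A' (t - s)
        have hin : HasDerivAt (fun s : ℝ => t - s) (-1) s := by
          simpa using (hasDerivAt_id s).const_sub t
        have := HasDerivAt.scomp s hout hin
        simpa [neg_one_smul, Function.comp_def] using this
      have h2 := hasDerivAt_exp_smul_const' (𝕂 := ℝ) A s
      have := h1.mul h2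
      refine this.congr_deriv ?_
      rw [hF']
      noncomm_ring
    -- bound on the derivative
    have hbound : ∀ s ∈ Set.Icc (0 : ℝ) t,
        ‖phi x₀ (F' s)‖ ≤ ‖A - A'‖ * M ^ 2 * d * Real.exp (α * t) := by
      intro s hs
      obtain ⟨hs0, hst⟩ := hs
      have hts : (0 : ℝ) ≤ t - s := by linarith
      -- inner vector
      have hxw : Matrix.toEuclideanLin ((A - A') * NormedSpace.exp (s • A)) x₀
          = Matrix.toEuclideanLin (A - A') (Matrix.toEuclideanLin (NormedSpace.exp (s • A)) w) := by
        rw [toEuclideanLin_mul]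
        have hx₀ : x₀ = v + w := by rw [hw]; abel
        rw [hx₀, map_add, map_add]
        have hEv : Matrix.toEuclideanLin (NormedSpace.exp (s • A)) v ∈ V :=
          exp_mem A V hinv s hvV
        rw [hagree _ hEv, zero_add]
      have hinner : ‖Matrix.toEuclideanLin ((A - A') * NormedSpace.exp (s • A)) x₀‖
          ≤ ‖A - A'‖ * (M * Real.exp (α * s) * d) := by
        rw [hxw]
        calc ‖Matrix.toEuclideanLin (A - A') (Matrix.toEuclideanLin (NormedSpace.exp (s • A)) w)‖
            ≤ ‖A - A'‖ * ‖Matrix.toEuclideanLin (NormedSpace.exp (s • A)) w‖ :=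
              norm_toEuclideanLin_apply_le _ _
          _ ≤ ‖A - A'‖ * (M * Real.exp (α * s) * d) := by
              refine mul_le_mul_of_nonneg_left ?_ (norm_nonneg _)
              calc ‖Matrix.toEuclideanLin (NormedSpace.exp (s • A)) w‖
                  ≤ ‖NormedSpace.exp (s • A)‖ * ‖w‖ := norm_toEuclideanLin_apply_le _ _
                _ ≤ M * Real.exp (α * s) * d := by
                    rw [hwnorm]
                    refine mul_le_mul_of_nonneg_right (hA s hs0) ?_
                    rw [← hwnorm]; exact norm_nonneg _
      have houter : ‖phi x₀ (F' s)‖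
          ≤ M * Real.exp (α * (t - s)) * (‖A - A'‖ * (M * Real.exp (α * s) * d)) := by
        rw [phi_apply, hF']
        rw [toEuclideanLin_mul]
        calc ‖Matrix.toEuclideanLin (NormedSpace.exp ((t - s) • A'))
              (Matrix.toEuclideanLin ((A - A') * NormedSpace.exp (s • A)) x₀)‖
            ≤ ‖NormedSpace.exp ((t - s) • A')‖
                * ‖Matrix.toEuclideanLin ((A - A') * NormedSpace.exp (s • A)) x₀‖ :=
              norm_toEuclideanLin_apply_le _ _
          _ ≤ M * Real.exp (α * (t - s)) * (‖A - A'‖ * (M * Real.exp (α * s) * d)) := by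
              have h0 : (0:ℝ) ≤ ‖Matrix.toEuclideanLin ((A - A') * NormedSpace.exp (s • A)) x₀‖ :=
                norm_nonneg _
              have hMe : (0:ℝ) ≤ M * Real.exp (α * (t - s)) :=
                mul_nonneg (le_trans zero_le_one hM) (Real.exp_pos _).le
              exact mul_le_mul (hA' _ hts) hinner h0 hMe
      refine houter.trans (le_of_eq ?_)
      rw [show α * t = α * (t - s) + α * s by ring, Real.exp_add]
      ring
    -- mean value inequality
    have hg : ∀ s ∈ Set.Icc (0:ℝ) t,
        HasDerivWithinAt (fun s => phi x₀ (F s)) (phi x₀ (F' s)) (Set.Icc (0:ℝ) t) s := by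
      intro s _
      exact (((phi x₀).hasFDerivAt.comp_hasDerivAt s (hderiv s))).hasDerivWithinAt
    have hmvt := (convex_Icc (0:ℝ) t).norm_image_sub_le_of_norm_hasDerivWithin_le hg hbound
      (Set.left_mem_Icc.mpr ht) (Set.right_mem_Icc.mpr ht)
    have hFt : phi x₀ (F t) = Matrix.toEuclideanLin (NormedSpace.exp (t • A)) x₀ := by
      rw [phi_apply, hF]
      simp [NormedSpace.exp_zero]
    have hF0 : phi x₀ (F 0) = Matrix.toEuclideanLin (NormedSpace.exp (t • A')) x₀ := by
      rw [phi_apply, hF]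
      simp [NormedSpace.exp_zero]
    rw [hFt, hF0] at hmvt
    calc ‖Matrix.toEuclideanLin (NormedSpace.exp (t • A)) x₀
          - Matrix.toEuclideanLin (NormedSpace.exp (t • A')) x₀‖
        ≤ ‖A - A'‖ * M ^ 2 * d * Real.exp (α * t) * ‖t - 0‖ := hmvt
      _ = ‖A - A'‖ * M ^ 2 * d * (t * Real.exp (α * t)) := by
          rw [sub_zero, Real.norm_of_nonneg ht]; ring
  refine ⟨hmain, ?_⟩
  intro ε hε T hT hpos hle t htIcc
  obtain ⟨ht0, htT⟩ := htIcc
  have hM0 : (0:ℝ) < M := lt_of_lt_of_le one_pos hM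
  have hAA0 : (0:ℝ) < ‖A - A'‖ := by
    rcases (norm_nonneg (A - A')).lt_or_eq with h | h
    · exact h
    · exfalso; rw [← h] at hpos; simp at hpos
  have hd0 : (0:ℝ) < d := by
    by_contra h
    push_neg at h
    have : ‖A - A'‖ * d ≤ 0 := mul_nonpos_of_nonneg_of_nonpos hAA0.le h
    exact absurd hpos (not_lt.mpr this)
  have hD0 : (0:ℝ) < ‖A - A'‖ * M ^ 2 * d := by positivity
  have hmono : t * Real.exp (α * t) ≤ T * Real.exp (α * T) := by
    refine mul_le_mul htT ?_ (Real.exp_pos _).le hT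
    exact Real.exp_le_exp.mpr (mul_le_mul_of_nonneg_left htT hα)
  calc ‖Matrix.toEuclideanLin (NormedSpace.exp (t • A)) x₀
        - Matrix.toEuclideanLin (NormedSpace.exp (t • A')) x₀‖
      ≤ ‖A - A'‖ * M ^ 2 * d * (t * Real.exp (α * t)) := hmain t ht0
    _ ≤ ‖A - A'‖ * M ^ 2 * d * (T * Real.exp (α * T)) :=
        mul_le_mul_of_nonneg_left hmono hD0.le
    _ ≤ ‖A - A'‖ * M ^ 2 * d * (ε / (‖A - A'‖ * M ^ 2 * d)) :=
        mul_le_mul_of_nonneg_left hle hD0.le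
    _ = ε := by field_simp
end

section
/- Let A ∈ ℝ^{n×n} and x₀ ∈ ℝⁿ be such that the vectors x₀, A x₀, …, A^{n-1} x₀ span ℝⁿ. If B ∈ ℝ^{n×n} satisfies B (exp(tA) x₀) = A (exp(tA) x₀) for all t in some interval [0, T] with T > 0, then B = A; that is, A is identifiable from x₀. -/
open MeasureTheory

namespace TrajAux

variable {n : ℕ}

/-- The linear map `M ↦ (C * M) *ᵥ x₀`. -/
noncomputable def Φ (C : Matrix (Fin n) (Fin n) ℝ) (x₀ : Fin n → ℝ) :
    Matrix (Fin n) (Fin n) ℝ →ₗ[ℝ] (Fin n → ℝ) where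
  toFun := fun M => (C * M).mulVec x₀
  map_add' := fun M N => by
    rw [mul_add, Matrix.add_mulVec]
  map_smul' := fun c M => by
    rw [mul_smul_comm, RingHom.id_apply, Matrix.smul_mulVec]

@[simp] lemma Φ_apply (C M : Matrix (Fin n) (Fin n) ℝ) (x₀ : Fin n → ℝ) :
    Φ C x₀ M = (C * M).mulVec x₀ := rfl

section WithInstances

attribute [local instance] Matrix.linftyOpNormedRing Matrix.linftyOpNormedAlgebra

lemma hasDerivAt_Φ_exp (C A : Matrix (Fin n) (Fin n) ℝ) (x₀ : Fin n → ℝ) (t : ℝ) :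
    HasDerivAt (fun s : ℝ => Φ C x₀ (NormedSpace.exp (s • A)))
      (Φ (C * A) x₀ (NormedSpace.exp (t • A))) t := by
  have h := hasDerivAt_exp_smul_const' (𝕂 := ℝ) A t
  have := ((Φ C x₀).toContinuousLinearMap.hasFDerivAt).comp_hasDerivAt t h
  have e : Φ (C * A) x₀ (NormedSpace.exp (t • A)) = Φ C x₀ (A * NormedSpace.exp (t • A)) := by
    simp [mul_assoc]
  rw [e]
  exact this

lemma continuous_Φ_exp (C A : Matrix (Fin n) (Fin n) ℝ) (x₀ : Fin n → ℝ) :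
    Continuous (fun s : ℝ => Φ C x₀ (NormedSpace.exp (s • A))) :=
  continuous_iff_continuousAt.mpr fun t => (hasDerivAt_Φ_exp C A x₀ t).continuousAt

end WithInstances

lemma key (A : Matrix (Fin n) (Fin n) ℝ) (x₀ : Fin n → ℝ)
    (hspan : Submodule.span ℝ
      (Set.range fun k : Fin n => (A ^ (k : ℕ)).mulVec x₀) = ⊤)
    (B : Matrix (Fin n) (Fin n) ℝ) (T : ℝ) (hT : 0 < T)
    (hB : ∀ t ∈ Set.Icc (0 : ℝ) T,
      B.mulVec ((NormedSpace.exp (t • A)).mulVec x₀)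
        = A.mulVec ((NormedSpace.exp (t • A)).mulVec x₀)) :
    B = A := by
  set D := B - A with hD
  -- main claim by induction on k
  have main : ∀ k : ℕ, ∀ t ∈ Set.Icc (0 : ℝ) T,
      Φ (D * A ^ k) x₀ (NormedSpace.exp (t • A)) = 0 := by
    intro k
    induction k with
    | zero =>
      intro t ht
      simp only [pow_zero, mul_one, Φ_apply, hD, Matrix.sub_mul, Matrix.sub_mulVec]
      rw [← Matrix.mulVec_mulVec, ← Matrix.mulVec_mulVec, hB t ht, sub_self]
    | succ k ih =>
      -- first on the open interval
      have ho : ∀ t ∈ Set.Ioo (0 : ℝ) T,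
          Φ (D * A ^ (k + 1)) x₀ (NormedSpace.exp (t • A)) = 0 := by
        intro t ht
        have hmem : Set.Ioo (0 : ℝ) T ∈ nhds t := (isOpen_Ioo).mem_nhds ht
        have hEq : (fun s : ℝ => Φ (D * A ^ k) x₀ (NormedSpace.exp (s • A)))
            =ᶠ[nhds t] fun _ => (0 : Fin n → ℝ) := by
          filter_upwards [hmem] with s hs
          exact ih s (Set.Ioo_subset_Icc_self hs)
        have h1 : HasDerivAt (fun s : ℝ => Φ (D * A ^ k) x₀ (NormedSpace.exp (s • A)))
            (Φ (D * A ^ k * A) x₀ (NormedSpace.exp (t • A))) t :=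
          hasDerivAt_Φ_exp (D * A ^ k) A x₀ t
        have h2 : HasDerivAt (fun _ : ℝ => (0 : Fin n → ℝ)) 0 t := hasDerivAt_const t 0
        have h3 := h2.congr_of_eventuallyEq hEq
        have := h1.unique h3
        rwa [mul_assoc, ← pow_succ] at this
      -- extend by continuity to the closed interval
      have hcont : Continuous fun t : ℝ =>
          Φ (D * A ^ (k + 1)) x₀ (NormedSpace.exp (t • A)) :=
        continuous_Φ_exp (D * A ^ (k + 1)) A x₀
      have hEqOn : Set.EqOn (fun t : ℝ => Φ (D * A ^ (k + 1)) x₀ (NormedSpace.exp (t • A)))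
          (fun _ => (0 : Fin n → ℝ)) (closure (Set.Ioo (0 : ℝ) T)) :=
        Set.EqOn.closure (fun t ht => ho t ht) hcont continuous_const
      intro t ht
      have : closure (Set.Ioo (0 : ℝ) T) = Set.Icc 0 T := closure_Ioo hT.ne
      exact hEqOn (this ▸ ht)
  -- evaluate at t = 0
  have h0 : ∀ k : ℕ, D.mulVec ((A ^ k).mulVec x₀) = 0 := by
    intro k
    have := main k 0 ⟨le_refl 0, hT.le⟩
    simpa [Matrix.mulVec_mulVec] using this
  -- D kills the spanning set, hence D = 0
  have hker : (⊤ : Submodule ℝ (Fin n → ℝ)) ≤ LinearMap.ker D.mulVecLin := by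
    rw [← hspan, Submodule.span_le]
    rintro _ ⟨k, rfl⟩
    exact h0 (k : ℕ)
  have hlin : Matrix.toLin' D = 0 := by
    apply LinearMap.ext
    intro v
    have hv : v ∈ LinearMap.ker D.mulVecLin := hker trivial
    simpa [Matrix.toLin'_apply] using hv
  have hD0 : D = 0 := by
    apply Matrix.toLin'.injective
    rw [hlin, map_zero]
  exact sub_eq_zero.mp hD0

end TrajAux

/-- If `x₀, A x₀, …, A^(n-1) x₀` span `ℝⁿ` and `B` satisfies
`B (exp (t A) x₀) = A (exp (t A) x₀)` for all `t` in some interval `[0, T]`, `T > 0`,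
then `B = A`; that is, `A` is identifiable from `x₀`. -/
theorem eq_of_agree_on_trajectory_of_span (n : ℕ)
    (A : Matrix (Fin n) (Fin n) ℝ) (x₀ : Fin n → ℝ)
    (hspan : Submodule.span ℝ
      (Set.range fun k : Fin n => (A ^ (k : ℕ)).mulVec x₀) = ⊤)
    (B : Matrix (Fin n) (Fin n) ℝ) (T : ℝ) (hT : 0 < T)
    (hB : ∀ t ∈ Set.Icc (0 : ℝ) T,
      B.mulVec ((NormedSpace.exp (t • A)).mulVec x₀)
        = A.mulVec ((NormedSpace.exp (t • A)).mulVec x₀)) :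
    B = A ∧ IdentifiableFrom A x₀ := by
  refine ⟨TrajAux.key A x₀ hspan B T hT hB, ?_⟩
  rintro ⟨B', hne, hall⟩
  apply hne
  apply TrajAux.key A x₀ hspan B' T hT
  intro t _
  -- derivative of both trajectories agree since the trajectories agree
  have h1 : HasDerivAt (fun s : ℝ => TrajAux.Φ (1 : Matrix (Fin n) (Fin n) ℝ) x₀
        (NormedSpace.exp (s • B')))
      (TrajAux.Φ ((1 : Matrix (Fin n) (Fin n) ℝ) * B') x₀ (NormedSpace.exp (t • B'))) t :=
    TrajAux.hasDerivAt_Φ_exp 1 B' x₀ t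
  have h2 : HasDerivAt (fun s : ℝ => TrajAux.Φ (1 : Matrix (Fin n) (Fin n) ℝ) x₀
        (NormedSpace.exp (s • A)))
      (TrajAux.Φ ((1 : Matrix (Fin n) (Fin n) ℝ) * A) x₀ (NormedSpace.exp (t • A))) t :=
    TrajAux.hasDerivAt_Φ_exp 1 A x₀ t
  have heq : (fun s : ℝ => TrajAux.Φ (1 : Matrix (Fin n) (Fin n) ℝ) x₀
      (NormedSpace.exp (s • B')))
      = fun s : ℝ => TrajAux.Φ (1 : Matrix (Fin n) (Fin n) ℝ) x₀
        (NormedSpace.exp (s • A)) := by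
    funext s
    simp only [TrajAux.Φ_apply, one_mul]
    exact hall s
  rw [heq] at h1
  have hUniq := h2.unique h1
  simp only [TrajAux.Φ_apply, one_mul] at hUniq
  rw [← Matrix.mulVec_mulVec, ← Matrix.mulVec_mulVec, hall t] at hUniq
  exact hUniq.symm
end
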